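/- arXiv:1403.5754 — 6 statements merged into one kernel-verified Lean document; each statement's English description precedes it below -/
import Mathlib

section
/- Let r ≥ 2 and n ≥ 2. Let π₀ = B(V) be a q-subgeometry of PG(r-1,q^n) and let l_∞ = PG(U) be a line of PG(r-1,q^n) that is not contained in the extension of any hyperplane of π₀. Then the splash S(π₀,l_∞) is an F_q-linear set of rank r: there exists a K-subspace U' of U with dim_K U' = r such that S(π₀,l_∞) = B(U'). -/
/-!
A `K`-basis of `V` is also an `L`-basis of `L^r`, so every `K`-functional `f` on `V` extends to
an `L`-functional `f_L` on `L^r`, and the extension of the hyperplane `ker f` of `V` is the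
`L`-hyperplane `ker f_L` (it is contained in it and has the same dimension). As `U` does not lie
in `ker f_L`, the line meets it in exactly one point, spanned by `f_L(u₁) u₀ - f_L(u₀) u₁` for a
basis `u₀, u₁` of `U`. This vector depends `K`-linearly and injectively on `f`, so the splash is
`B` of the image of the `r`-dimensional space `V^*`.
-/

open Submodule Module

/-- `BSet L X` is the set of projective points (1-dimensional `L`-subspaces of `W`)
spanned by the nonzero vectors of `X`. -/
def BSet (L : Type*) [Field L] {W : Type*} [AddCommGroup W] [Module L W]
    (X : Set W) : Set (Submodule L W) :=
  {P | ∃ x ∈ X, x ≠ 0 ∧ P = Submodule.span L {x}}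

/-- The splash of the `q`-subgeometry `B(V)` of `PG(W)` on the line `PG(U)`:
the set of points of `PG(U)` lying in the `L`-span (extension) of some hyperplane
(`(r-1)`-dimensional `K`-subspace) of `V`. -/
def Splash (K L : Type*) [Field K] [Field L] [Algebra K L]
    {W : Type*} [AddCommGroup W] [Module L W] [Module K W] [IsScalarTower K L W]
    (V : Submodule K W) (U : Submodule L W) (r : ℕ) : Set (Submodule L W) :=
  {P | Module.finrank L P = 1 ∧ P ≤ U ∧
    ∃ H : Submodule K W, H ≤ V ∧ Module.finrank K H = r - 1 ∧
      P ≤ Submodule.span L (H : Set W)}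

namespace Module.Basis

variable {L M : Type*} [Field L] [AddCommGroup M] [Module L M] (e : Basis (Fin 2) L M)

noncomputable def kerGen : Dual L M →ₗ[L] M where
  toFun g := g (e 1) • e 0 - g (e 0) • e 1
  map_add' g h := by simp only [LinearMap.add_apply, add_smul]; abel
  map_smul' a g := by
    simp only [LinearMap.smul_apply, smul_eq_mul, mul_smul, smul_sub, RingHom.id_apply]

theorem kerGen_apply (g : Dual L M) : e.kerGen g = g (e 1) • e 0 - g (e 0) • e 1 := rfl

theorem apply_kerGen_self (g : Dual L M) : g (e.kerGen g) = 0 := by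
  simp [kerGen_apply, mul_comm]

theorem kerGen_injective : Function.Injective e.kerGen := by
  rw [← LinearMap.ker_eq_bot, eq_bot_iff]
  intro g hg
  rw [LinearMap.mem_ker, kerGen_apply, sub_eq_zero] at hg
  have hcoeff := Fintype.linearIndependent_iff.mp e.linearIndependent ![g (e 1), -g (e 0)]
    (by simp [Fin.sum_univ_two, hg])
  refine (Submodule.mem_bot L).mpr (e.ext fun i => ?_)
  fin_cases i
  · simpa using hcoeff 1
  · simpa using hcoeff 0

theorem ker_eq_span_kerGen {g : Dual L M} (hg : g ≠ 0) :
    LinearMap.ker g = span L {e.kerGen g} := by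
  have : Module.Finite L M := Module.Finite.of_basis e
  have hrank := Module.Dual.finrank_ker_add_one_of_ne_zero hg
  rw [finrank_eq_card_basis e, Fintype.card_fin] at hrank
  exact eq_span_singleton_of_mem_of_finrank_eq_one (by omega) (e.apply_kerGen_self g)
    ((map_ne_zero_iff _ e.kerGen_injective).mpr hg)

end Module.Basis

theorem finrank_map_subtype_ker {K W ι : Type*} [Field K] [AddCommGroup W] [Module K W]
    [Fintype ι] {V : Submodule K W} (b : Basis ι K V) {f : Dual K V} (hf : f ≠ 0) :
    finrank K (map V.subtype (LinearMap.ker f)) = Fintype.card ι - 1 := by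
  have : Module.Finite K V := .of_basis b
  have := Module.Dual.finrank_ker_add_one_of_ne_zero hf
  rw [finrank_eq_card_basis b] at this
  rw [finrank_map_subtype_eq]
  omega

section ExtendDual

variable {K L W ι : Type*} [Field K] [Field L] [Algebra K L] [AddCommGroup W] [Module L W]
  [Module K W] [IsScalarTower K L W] {V : Submodule K W} {b : Basis ι K V} {c : Basis ι L W}

variable (b c) in
noncomputable def extendDual : Dual K V →ₗ[K] Dual L W where
  toFun f := c.constr L fun i => algebraMap K L (f (b i))
  map_add' f g := c.ext fun i => by simp
  map_smul' a f := c.ext fun i => by simp [Algebra.smul_def]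

theorem extendDual_apply_coe (hbc : ∀ i, (b i : W) = c i) (f : Dual K V) (y : V) :
    extendDual b c f y = algebraMap K L (f y) := by
  have : ((extendDual b c f).restrictScalars K).comp V.subtype = (Algebra.linearMap K L).comp f :=
    b.ext fun i => by simp [extendDual, hbc]
  exact LinearMap.congr_fun this y

variable [Fintype ι]

theorem span_map_ker_eq_ker_extendDual (hbc : ∀ i, (b i : W) = c i)
    {f : Dual K V} (hf : f ≠ 0) :
    span L (map V.subtype (LinearMap.ker f) : Set W) = LinearMap.ker (extendDual b c f) := by
  have : Module.Finite L W := Module.Finite.of_basis c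
  have hspan : span L (V : Set W) = ⊤ :=
    eq_top_iff.mpr (c.span_eq ▸ span_mono (Set.range_subset_iff.mpr fun i => hbc i ▸ (b i).2))
  obtain ⟨y, hy⟩ : ∃ y, f y ≠ 0 := by simpa [DFunLike.ext_iff] using hf
  have hext0 : extendDual b c f ≠ 0 := fun h => hy <| by
    simpa [extendDual_apply_coe hbc] using LinearMap.congr_fun h y
  refine eq_of_le_of_finrank_le (span_le.mpr ?_) ?_
  · rintro _ ⟨z, hz, rfl⟩
    simp_all [extendDual_apply_coe hbc]
  have hsup : span L {(y : W)} ⊔ span L (map V.subtype (LinearMap.ker f) : Set W) = ⊤ := by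
    rw [eq_top_iff, ← hspan, span_le]
    intro v hv
    obtain ⟨a, ha, k, hk, hak⟩ := mem_sup.mp
      ((LinearMap.span_singleton_sup_ker_eq_top f hy).ge (mem_top (x := ⟨v, hv⟩)))
    obtain ⟨t, rfl⟩ := mem_span_singleton.mp ha
    rw [SetLike.mem_coe, show v = t • (y : W) + k from (congrArg Subtype.val hak).symm]
    exact add_mem_sup (smul_of_tower_mem _ t (mem_span_singleton_self _))
      (subset_span ⟨k, hk, rfl⟩)
  have hker := Module.Dual.finrank_ker_add_one_of_ne_zero hext0
  have hle := finrank_add_le_finrank_add_finrank (span L {(y : W)})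
    (span L (map V.subtype (LinearMap.ker f) : Set W))
  rw [hsup, finrank_top] at hle
  have hy0 : (y : W) ≠ 0 := by simpa using ne_of_apply_ne f (by simpa using hy)
  rw [finrank_span_singleton hy0] at hle
  omega

theorem exists_ne_zero_span_le_ker_extendDual (hbc : ∀ i, (b i : W) = c i)
    {H : Submodule K W} (hHV : H ≤ V) (hH : finrank K H < Fintype.card ι) :
    ∃ f : Dual K V, f ≠ 0 ∧ span L (H : Set W) ≤ LinearMap.ker (extendDual b c f) := by
  have : Module.Finite K V := .of_basis b
  have hlt : comap V.subtype H < ⊤ := by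
    rw [lt_top_iff_ne_top]
    intro htop
    have := finrank_map_subtype_eq V (comap V.subtype H)
    rw [map_comap_subtype, inf_eq_right.mpr hHV, htop, finrank_top, finrank_eq_card_basis b]
      at this
    omega
  obtain ⟨f, hf0, hfH⟩ := exists_dual_map_eq_bot_of_lt_top hlt inferInstance
  refine ⟨f, hf0, span_le.mpr fun x hx => ?_⟩
  have hfx : f ⟨x, hHV hx⟩ = 0 := (mem_bot K).mp (hfH ▸ mem_map_of_mem (by exact hx))
  rw [SetLike.mem_coe, LinearMap.mem_ker, show x = ((⟨x, hHV hx⟩ : V) : W) from rfl,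
    extendDual_apply_coe hbc, hfx, map_zero]

end ExtendDual

section SplashMap

variable {K L W ι : Type*} [Field K] [Field L] [Algebra K L] [AddCommGroup W] [Module L W]
  [Module K W] [IsScalarTower K L W] {V : Submodule K W} {b : Basis ι K V} {c : Basis ι L W}
  {U : Submodule L W}

variable (b c) in
noncomputable def splashMap (e : Basis (Fin 2) L U) : Dual K V →ₗ[K] W :=
  U.subtype.restrictScalars K ∘ₗ e.kerGen.restrictScalars K ∘ₗ
    U.subtype.dualMap.restrictScalars K ∘ₗ extendDual b c

theorem splashMap_mem (e : Basis (Fin 2) L U) (f : Dual K V) : splashMap b c e f ∈ U :=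
  (e.kerGen _).2

theorem extendDual_splashMap (e : Basis (Fin 2) L U) (f : Dual K V) :
    extendDual b c f (splashMap b c e f) = 0 :=
  e.apply_kerGen_self (U.subtype.dualMap (extendDual b c f))

theorem splashMap_ne_zero (e : Basis (Fin 2) L U) {f : Dual K V}
    (hf : U.subtype.dualMap (extendDual b c f) ≠ 0) : splashMap b c e f ≠ 0 := by
  simpa [splashMap] using (map_ne_zero_iff _ e.kerGen_injective).mpr hf

theorem eq_span_splashMap (e : Basis (Fin 2) L U) {f : Dual K V}
    (hf : U.subtype.dualMap (extendDual b c f) ≠ 0) {P : Submodule L W}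
    (hP : finrank L P = 1) (hPU : P ≤ U) (hPker : P ≤ LinearMap.ker (extendDual b c f)) :
    P = span L {splashMap b c e f} := by
  refine eq_of_le_of_finrank_eq (fun x hx => ?_) ?_
  · have hker : (⟨x, hPU hx⟩ : U) ∈ LinearMap.ker (U.subtype.dualMap (extendDual b c f)) :=
      hPker hx
    obtain ⟨μ, hμ⟩ := mem_span_singleton.mp (e.ker_eq_span_kerGen hf ▸ hker)
    exact mem_span_singleton.mpr ⟨μ, congrArg Subtype.val hμ⟩
  · rw [hP, finrank_span_singleton (splashMap_ne_zero e hf)]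

variable [Fintype ι]

theorem dualMap_extendDual_ne_zero (hbc : ∀ i, (b i : W) = c i)
    (hext : ∀ H : Submodule K W, H ≤ V → finrank K H = Fintype.card ι - 1 →
      ¬ U ≤ span L (H : Set W)) {f : Dual K V} (hf : f ≠ 0) :
    U.subtype.dualMap (extendDual b c f) ≠ 0 := by
  intro h0
  refine hext _ (map_subtype_le _ _) (finrank_map_subtype_ker b hf) ?_
  rw [span_map_ker_eq_ker_extendDual hbc hf]
  exact fun x hx => LinearMap.congr_fun h0 ⟨x, hx⟩

theorem splashMap_injective (hbc : ∀ i, (b i : W) = c i)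
    (hext : ∀ H : Submodule K W, H ≤ V → finrank K H = Fintype.card ι - 1 →
      ¬ U ≤ span L (H : Set W)) (e : Basis (Fin 2) L U) :
    Function.Injective (splashMap b c e) := by
  rw [← LinearMap.ker_eq_bot, eq_bot_iff]
  intro f hf
  by_contra hf0
  exact splashMap_ne_zero e (dualMap_extendDual_ne_zero hbc hext hf0) hf

theorem bSet_range_splashMap (hbc : ∀ i, (b i : W) = c i)
    (hext : ∀ H : Submodule K W, H ≤ V → finrank K H = Fintype.card ι - 1 →
      ¬ U ≤ span L (H : Set W)) (e : Basis (Fin 2) L U) :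
    BSet L (LinearMap.range (splashMap b c e) : Set W) = Splash K L V U (Fintype.card ι) := by
  ext P
  constructor
  · rintro ⟨_, ⟨f, rfl⟩, hψ0, rfl⟩
    have hf : f ≠ 0 := by rintro rfl; exact hψ0 (map_zero _)
    refine ⟨finrank_span_singleton hψ0, span_le.mpr (by simpa using splashMap_mem e f),
      _, map_subtype_le _ _, finrank_map_subtype_ker b hf, ?_⟩
    rw [span_map_ker_eq_ker_extendDual hbc hf, span_singleton_le_iff_mem]
    exact extendDual_splashMap e f
  · rintro ⟨hP, hPU, H, hHV, hH, hPH⟩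
    have : Module.Finite L W := .of_basis c
    have hcard : 2 ≤ Fintype.card ι := by
      simpa [finrank_eq_card_basis e, finrank_eq_card_basis c] using finrank_le U
    obtain ⟨f, hf, hHf⟩ := exists_ne_zero_span_le_ker_extendDual hbc hHV (by omega)
    have hg := dualMap_extendDual_ne_zero hbc hext hf
    exact ⟨_, ⟨f, rfl⟩, splashMap_ne_zero e hg, eq_span_splashMap e hg hP hPU (hPH.trans hHf)⟩

end SplashMap

theorem splash_is_linear_set_general
    (K L : Type*) [Field K] [Field L] [Algebra K L]
    (r : ℕ) (hr : 2 ≤ r)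
    (V : Submodule K (Fin r → L))
    (hVrank : Module.finrank K V = r)
    (hVspan : Submodule.span L (V : Set (Fin r → L)) = ⊤)
    (U : Submodule L (Fin r → L)) (hU : Module.finrank L U = 2)
    (hext : ∀ H : Submodule K (Fin r → L), H ≤ V → Module.finrank K H = r - 1 →
      ¬ U ≤ Submodule.span L (H : Set (Fin r → L))) :
    ∃ U' : Submodule K (Fin r → L), U' ≤ U.restrictScalars K ∧
      Module.finrank K U' = r ∧
      BSet L (U' : Set (Fin r → L)) = Splash K L V U r := by
  have : Module.Finite K V := Module.finite_of_finrank_pos (by omega)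
  let b := Module.finBasisOfFinrankEq K V hVrank
  have hspanK : span K (Set.range ((↑) ∘ b : Fin r → Fin r → L)) = V := by
    rw [Set.range_comp, ← V.coe_subtype, ← map_span, b.span_eq, Submodule.map_top,
      range_subtype]
  have hspan : ⊤ ≤ span L (Set.range ((↑) ∘ b : Fin r → Fin r → L)) := by
    rw [← span_span_of_tower K, hspanK, hVspan]
  let c := basisOfTopLeSpanOfCardEqFinrank _ hspan (by simp)
  have hbc : ∀ i, (b i : Fin r → L) = c i := fun i => by simp [c]
  have hext' : ∀ H : Submodule K (Fin r → L), H ≤ V → finrank K H = Fintype.card (Fin r) - 1 →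
      ¬ U ≤ span L (H : Set (Fin r → L)) := by
    rwa [Fintype.card_fin]
  let e := Module.finBasisOfFinrankEq L U hU
  refine ⟨LinearMap.range (splashMap b c e), fun _ ⟨f, hf⟩ => hf ▸ splashMap_mem e f, ?_, ?_⟩
  · rw [LinearMap.finrank_range_of_inj (splashMap_injective hbc hext' e), Subspace.dual_finrank_eq,
      hVrank]
  · simpa using bSet_range_splashMap hbc hext' e

/-- the splash of a `q`-subgeometry on a line is an `F_q`-linear set of
rank `r`. -/
theorem splash_is_linear_set
    (K L : Type*) [Field K] [Field L] [Algebra K L] [Fintype K] [Fintype L]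
    (r n : ℕ) (hr : 2 ≤ r) (hn : 2 ≤ n) (hrank : Module.finrank K L = n)
    (V : Submodule K (Fin r → L))
    (hVrank : Module.finrank K V = r)
    (hVspan : Submodule.span L (V : Set (Fin r → L)) = ⊤)
    (U : Submodule L (Fin r → L)) (hU : Module.finrank L U = 2)
    (hext : ∀ H : Submodule K (Fin r → L), H ≤ V → Module.finrank K H = r - 1 →
      ¬ U ≤ Submodule.span L (H : Set (Fin r → L))) :
    ∃ U' : Submodule K (Fin r → L), U' ≤ U.restrictScalars K ∧
      Module.finrank K U' = r ∧
      BSet L (U' : Set (Fin r → L)) = Splash K L V U r :=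
  splash_is_linear_set_general K L r hr V hVrank hVspan U hU hext
end

section
/- Let q > 2, let 3 ≤ r ≤ n, let T be a point of PG(1,q^n) and A a set of q^{r-1} points of PG(1,q^n) with T ∉ A. Suppose that for any two distinct points P, Q ∈ A, the unique q-subline through T, P, Q is contained in {T} ∪ A (i.e. for every 2-dimensional K-subspace M of L^2 with |B(M)| = q+1 and T, P, Q ∈ B(M) one has B(M) ⊆ {T} ∪ A). Then there exists an r-dimensional K-subspace U₀ of L^2 with B(U₀) = {T} ∪ A and dim_K(U₀ ∩ T) = r-1; that is, {T} ∪ A is an F_q-club of rank r with head T. -/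
/-!
Write `T = L t` and pick `s ∉ T`; every other point of `PG(1, q^n)` is `⟨s + a t⟩` for a unique
coordinate `a ∈ L`. The `q`-subline through `T`, `⟨s + a t⟩` and `⟨s + b t⟩` consists of `T` and
the points with coordinates `μ a + (1 - μ) b`, `μ ∈ K`, so the coordinate set `S` of `A` contains
the `K`-affine line through any two of its points. As `q > 2`, this makes `S` a coset `s₀ + V` of a
`K`-subspace, of dimension `r - 1` by counting, and `U₀ = K (s + s₀ t) + V t` has as points exactly
`T` and those of `A`, with `U₀ ∩ T = V t`.
-/

open Submodule Module

section LineClosed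

variable {K E : Type*} [Field K] [AddCommGroup E] [Module K E]

theorem exists_ne_zero_ne_one_of_two_lt_card [Fintype K] (h : 2 < Fintype.card K) :
    ∃ μ : K, μ ≠ 0 ∧ μ ≠ 1 := by
  classical
  obtain ⟨μ, -, hμ⟩ := Finset.exists_mem_notMem_of_card_lt_card
    (s := {0, 1}) (t := Finset.univ) (Finset.card_le_two.trans_lt h)
  exact ⟨μ, by simpa [not_or] using hμ⟩

theorem exists_submodule_of_lineClosed {μ : K} (hμ0 : μ ≠ 0) (hμ1 : μ ≠ 1) {S : Set E} {s₀ : E}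
    (hs₀ : s₀ ∈ S) (hline : ∀ a ∈ S, ∀ b ∈ S, ∀ c : K, c • a + (1 - c) • b ∈ S) :
    ∃ V : Submodule K E, ∀ a, a ∈ S ↔ a - s₀ ∈ V := by
  have hsmul : ∀ x, x + s₀ ∈ S → ∀ c : K, c • x + s₀ ∈ S := fun x hx c => by
    convert hline _ hx _ hs₀ c using 1
    module
  have hadd : ∀ x y, x + s₀ ∈ S → y + s₀ ∈ S → (x + y) + s₀ ∈ S := by
    intro x y hx hy
    -- `(1 - μ) • (x + y) + s₀` lies on the line through `μ⁻¹ (1 - μ) • x + s₀` and `y + s₀`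
    have h := hline _ (hsmul x hx (μ⁻¹ * (1 - μ))) _ hy μ
    rw [smul_add, smul_smul, mul_inv_cancel_left₀ hμ0,
      show (1 - μ) • x + μ • s₀ + (1 - μ) • (y + s₀) = (1 - μ) • (x + y) + s₀ by module] at h
    simpa [smul_smul, inv_mul_cancel₀ (sub_ne_zero.2 hμ1.symm)] using hsmul _ h (1 - μ)⁻¹
  refine ⟨{ carrier := {x | x + s₀ ∈ S}
            add_mem' := hadd _ _
            zero_mem' := by simpa using hs₀
            smul_mem' := fun c x hx => hsmul x hx c }, fun a => ?_⟩
  simp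

theorem ncard_setOf_sub_mem (V : Submodule K E) (a₀ : E) :
    {a | a - a₀ ∈ V}.ncard = Nat.card V := by
  rw [← Nat.card_coe_set_eq]
  exact Nat.card_congr ((Equiv.subRight a₀).subtypeEquiv fun _ => Iff.rfl)

theorem finrank_eq_of_ncard_setOf_sub_mem [Fintype K] (hK : 1 < Fintype.card K)
    {V : Submodule K E} {a₀ : E} {m : ℕ} (h : {a | a - a₀ ∈ V}.ncard = Fintype.card K ^ m) :
    finrank K V = m := by
  rw [ncard_setOf_sub_mem] at h
  have : Finite V := Nat.finite_of_card_ne_zero (by rw [h]; positivity)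
  refine Nat.pow_right_injective hK ?_
  dsimp only
  rw [← h, Module.natCard_eq_pow_finrank (K := K), Nat.card_eq_fintype_card]

end LineClosed

section Coordinates

variable {L W : Type*} [Field L] [AddCommGroup W] [Module L W] {s t : W}

theorem exists_ne_zero_eq_span_singleton {P : Submodule L W} (hP : finrank L P = 1) :
    ∃ x ≠ 0, P = L ∙ x := by
  obtain ⟨x, hx, hx0⟩ := P.ne_bot_iff.1 fun h => by rw [h, finrank_bot] at hP; exact zero_ne_one hP
  exact ⟨x, hx0, eq_span_singleton_of_mem_of_finrank_eq_one hP hx hx0⟩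

theorem smul_add_smul_mem_span_iff (hs : s ∉ L ∙ t) {α β : L} :
    α • s + β • t ∈ L ∙ t ↔ α = 0 := by
  rw [Submodule.add_mem_iff_left _ (smul_mem _ β (mem_span_singleton_self t))]
  refine ⟨fun h => ?_, fun h => by simp [h]⟩
  by_contra hα
  exact hs ((smul_mem_iff _ hα).1 h)

theorem add_smul_notMem_span (hs : s ∉ L ∙ t) (a : L) : s + a • t ∉ L ∙ t := by
  simpa using (smul_add_smul_mem_span_iff hs (α := 1) (β := a)).not

theorem add_smul_ne_zero (hs : s ∉ L ∙ t) (a : L) : s + a • t ≠ 0 :=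
  fun h => add_smul_notMem_span hs a (h ▸ zero_mem _)

theorem span_pair_eq_top (hW : finrank L W = 2) (hs : s ∉ L ∙ t) (ht : t ≠ 0) :
    span L {t, s} = ⊤ := by
  have : FiniteDimensional L W := Module.finite_of_finrank_pos (by omega)
  have hlt : L ∙ t < span L {t, s} :=
    (span_mono (by simp)).lt_of_ne fun h => hs (h ▸ subset_span (by simp))
  have := Submodule.finrank_lt_finrank_of_lt hlt
  have := Submodule.finrank_le (span L {t, s})
  rw [finrank_span_singleton ht] at *
  exact eq_top_of_finrank_eq (by omega)

/-- The point of the projective line `ℙ(W)` with affine coordinate `a` in the frame where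
`L ∙ t` is the point at infinity. -/
def coordPoint (s t : W) (a : L) : Submodule L W := L ∙ (s + a • t)

theorem coordPoint_ne_span (hs : s ∉ L ∙ t) (a : L) : coordPoint s t a ≠ L ∙ t :=
  fun h => add_smul_notMem_span hs a (h ▸ mem_span_singleton_self _)

theorem coordPoint_injective (hs : s ∉ L ∙ t) (ht : t ≠ 0) :
    Function.Injective (coordPoint s t : L → Submodule L W) := by
  intro a b h
  obtain ⟨c, hc⟩ := (span_singleton_eq_span_singleton (R := L)).1 h
  rw [Units.smul_def] at hc
  have hc1 : (c : L) - 1 = 0 := by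
    refine (smul_add_smul_mem_span_iff hs (β := c * a - b)).1 ?_
    convert zero_mem (L ∙ t) using 1
    linear_combination (norm := module) hc
  rw [sub_eq_zero.1 hc1, one_smul, add_right_inj] at hc
  exact smul_left_injective L ht hc

theorem exists_eq_coordPoint (hW : finrank L W = 2) (hs : s ∉ L ∙ t) (ht : t ≠ 0)
    {P : Submodule L W} (hP : finrank L P = 1) (hPt : P ≠ L ∙ t) :
    ∃ a, P = coordPoint s t a := by
  obtain ⟨x, hx0, rfl⟩ := exists_ne_zero_eq_span_singleton hP
  obtain ⟨β, α, rfl⟩ := mem_span_pair.1 (span_pair_eq_top hW hs ht ▸ mem_top : x ∈ span L {t, s})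
  have hα : α ≠ 0 := by
    rintro rfl
    have hβ : β ≠ 0 := by rintro rfl; simp at hx0
    simp [span_singleton_smul_eq (IsUnit.mk0 β hβ)] at hPt
  refine ⟨β / α, ?_⟩
  have hx : β • t + α • s = α • (s + (β / α) • t) := by match_scalars <;> field_simp
  rw [coordPoint, hx, span_singleton_smul_eq (IsUnit.mk0 α hα)]

end Coordinates

section Club

variable {K L W : Type*} [Field K] [Field L] [Algebra K L] [AddCommGroup W] [Module L W]
  [Module K W] [IsScalarTower K L W] {s t : W} {a₀ : L} {V : Submodule K L}

/-- The subspace `K (s + a₀ t) + V t`. -/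
def clubSubspace (s t : W) (a₀ : L) (V : Submodule K L) : Submodule K W :=
  K ∙ (s + a₀ • t) ⊔ V.map ((LinearMap.toSpanSingleton L W t).restrictScalars K)

theorem mem_clubSubspace {x : W} :
    x ∈ clubSubspace s t a₀ V ↔ ∃ c : K, ∃ v ∈ V, c • (s + a₀ • t) + v • t = x := by
  simp [clubSubspace, mem_sup, mem_span_singleton]

theorem smul_add_smul_eq_algebraMap (c : K) (v : L) :
    c • (s + a₀ • t) + v • t = algebraMap K L c • s + (algebraMap K L c * a₀ + v) • t := by
  rw [← algebraMap_smul L c]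
  module

theorem finrank_map_toSpanSingleton (ht : t ≠ 0) :
    finrank K (V.map ((LinearMap.toSpanSingleton L W t).restrictScalars K)) = finrank K V :=
  (equivMapOfInjective _ (smul_left_injective L ht) V).finrank_eq.symm

theorem clubSubspace_inf_span (hs : s ∉ L ∙ t) :
    clubSubspace s t a₀ V ⊓ (L ∙ t).restrictScalars K =
      V.map ((LinearMap.toSpanSingleton L W t).restrictScalars K) := by
  refine le_antisymm ?_ (le_inf le_sup_right ?_)
  · intro x hx
    obtain ⟨hx, hxt⟩ := mem_inf.1 hx
    obtain ⟨c, v, hv, rfl⟩ := mem_clubSubspace.1 hx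
    rw [restrictScalars_mem, smul_add_smul_eq_algebraMap, smul_add_smul_mem_span_iff hs,
      FaithfulSMul.algebraMap_eq_zero_iff] at hxt
    simpa [hxt] using mem_map_of_mem (f := (LinearMap.toSpanSingleton L W t).restrictScalars K) hv
  · rintro _ ⟨v, -, rfl⟩
    exact smul_mem _ v (mem_span_singleton_self t)

theorem finrank_clubSubspace (hs : s ∉ L ∙ t) (ht : t ≠ 0) [FiniteDimensional K V] :
    finrank K (clubSubspace s t a₀ V) = finrank K V + 1 := by
  set f := (LinearMap.toSpanSingleton L W t).restrictScalars K
  have hdisj : Disjoint (V.map f) (K ∙ (s + a₀ • t)) := by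
    refine disjoint_span_singleton_of_notMem fun ⟨v, _, hv⟩ => add_smul_notMem_span hs a₀ ?_
    exact hv ▸ smul_mem _ v (mem_span_singleton_self t)
  have := finrank_sup_add_finrank_inf_eq (V.map f) (K ∙ (s + a₀ • t))
  rw [hdisj.eq_bot, finrank_bot, finrank_span_singleton (add_smul_ne_zero hs a₀),
    finrank_map_toSpanSingleton ht] at this
  rw [clubSubspace, sup_comm]
  omega

theorem bSet_clubSubspace (hs : s ∉ L ∙ t) (ht : t ≠ 0) (hV : V ≠ ⊥) :
    BSet L (clubSubspace s t a₀ V : Set W) =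
      insert (L ∙ t) (coordPoint s t '' {a | a - a₀ ∈ V}) := by
  ext P
  constructor
  · rintro ⟨x, hx, hx0, rfl⟩
    obtain ⟨c, v, hv, rfl⟩ := mem_clubSubspace.1 hx
    rcases eq_or_ne c 0 with rfl | hc
    · have hv0 : v ≠ 0 := by rintro rfl; simp at hx0
      left
      simp [span_singleton_smul_eq (IsUnit.mk0 v hv0)]
    · right
      refine ⟨a₀ + c⁻¹ • v, by simpa using V.smul_mem c⁻¹ hv, ?_⟩
      have hc' : algebraMap K L c ≠ 0 := (FaithfulSMul.algebraMap_eq_zero_iff K L).not.2 hc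
      rw [coordPoint, ← span_singleton_smul_eq (IsUnit.mk0 _ hc'), smul_add_smul_eq_algebraMap,
        Algebra.smul_def, map_inv₀]
      congr 2
      match_scalars <;> field_simp
  · rintro (rfl | ⟨a, ha, rfl⟩)
    · obtain ⟨v, hv, hv0⟩ := V.ne_bot_iff.1 hV
      exact ⟨v • t, mem_clubSubspace.2 ⟨0, v, hv, by simp⟩, smul_ne_zero hv0 ht,
        (span_singleton_smul_eq (IsUnit.mk0 v hv0) t).symm⟩
    · exact ⟨s + a • t, mem_clubSubspace.2 ⟨1, a - a₀, ha, by module⟩,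
        add_smul_ne_zero hs a, rfl⟩

theorem ncard_bSet_clubSubspace (hs : s ∉ L ∙ t) (ht : t ≠ 0) (hV : V ≠ ⊥) [Finite V] :
    (BSet L (clubSubspace s t a₀ V : Set W)).ncard = Nat.card V + 1 := by
  have hfin : {a | a - a₀ ∈ V}.Finite :=
    (V : Set L).toFinite.preimage (sub_left_injective.injOn)
  rw [bSet_clubSubspace hs ht hV, Set.ncard_insert_of_notMem _ (hfin.image _),
    Set.ncard_image_of_injective _ (coordPoint_injective hs ht), ncard_setOf_sub_mem]
  rintro ⟨a, -, h⟩
  exact coordPoint_ne_span hs a h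

end Club

/-- The `q`-subline through the head `L ∙ t` and the points with coordinates `a ≠ b` is
`clubSubspace s t b (K ∙ (a - b))`. -/
theorem coordPoint_mem_of_sublines_subset {K L W : Type*} [Field K] [Fintype K] [Field L]
    [Algebra K L] [AddCommGroup W] [Module L W] [Module K W] [IsScalarTower K L W] {s t : W}
    (hs : s ∉ L ∙ t) (ht : t ≠ 0) {A : Set (Submodule L W)} {a b : L} (hab : a ≠ b)
    (hclosed : ∀ M : Submodule K W, finrank K M = 2 →
      (BSet L (M : Set W)).ncard = Fintype.card K + 1 → L ∙ t ∈ BSet L (M : Set W) →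
      coordPoint s t a ∈ BSet L (M : Set W) → coordPoint s t b ∈ BSet L (M : Set W) →
      BSet L (M : Set W) ⊆ insert (L ∙ t) A)
    (μ : K) : coordPoint s t (μ • a + (1 - μ) • b) ∈ A := by
  have hab' : a - b ≠ 0 := sub_ne_zero.2 hab
  have hV : K ∙ (a - b) ≠ ⊥ := by simpa using hab'
  have : Finite (K ∙ (a - b)) := Module.finite_of_finite K
  have hB := bSet_clubSubspace (a₀ := b) hs ht hV
  have hmem : ∀ a', a' - b ∈ K ∙ (a - b) →
      coordPoint s t a' ∈ BSet L (clubSubspace s t b (K ∙ (a - b)) : Set W) :=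
    fun a' h => hB ▸ Set.mem_insert_of_mem _ ⟨a', h, rfl⟩
  have hsub := hclosed _ (by rw [finrank_clubSubspace hs ht, finrank_span_singleton hab'])
    (by rw [ncard_bSet_clubSubspace hs ht hV, ← Nat.card_eq_fintype_card,
      Nat.card_congr (LinearEquiv.toSpanNonzeroSingleton K L _ hab').toEquiv])
    (hB ▸ Set.mem_insert _ _) (hmem a (mem_span_singleton_self _)) (hmem b (by simp))
  exact (hsub (hmem _ (mem_span_singleton.2 ⟨μ, by module⟩))).resolve_left
    (coordPoint_ne_span hs _)

theorem subline_closed_is_club_general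
    (K L : Type*) [Field K] [Field L] [Algebra K L] [Fintype K]
    (q r : ℕ) (hq : Fintype.card K = q) (hq2 : 2 < q)
    (hr : 3 ≤ r)
    (T : Submodule L (Fin 2 → L)) (hT : Module.finrank L T = 1)
    (A : Set (Submodule L (Fin 2 → L)))
    (hA : ∀ P ∈ A, Module.finrank L P = 1)
    (hAcard : A.ncard = q ^ (r - 1)) (hTA : T ∉ A)
    (hclosed : ∀ P ∈ A, ∀ Q ∈ A, P ≠ Q →
      ∀ M : Submodule K (Fin 2 → L), Module.finrank K M = 2 →
        (BSet L (M : Set (Fin 2 → L))).ncard = q + 1 →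
        T ∈ BSet L (M : Set (Fin 2 → L)) →
        P ∈ BSet L (M : Set (Fin 2 → L)) →
        Q ∈ BSet L (M : Set (Fin 2 → L)) →
        BSet L (M : Set (Fin 2 → L)) ⊆ insert T A) :
    ∃ U₀ : Submodule K (Fin 2 → L), Module.finrank K U₀ = r ∧
      BSet L (U₀ : Set (Fin 2 → L)) = insert T A ∧
      Module.finrank K ↥(U₀ ⊓ T.restrictScalars K) = r - 1 := by
  subst hq
  obtain ⟨t, ht, rfl⟩ := exists_ne_zero_eq_span_singleton hT
  have hW : finrank L (Fin 2 → L) = 2 := by simp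
  obtain ⟨s, -, hs⟩ := SetLike.exists_of_lt ((lt_top_iff_ne_top (a := L ∙ t)).2 fun h => by
    rw [h, finrank_top, hW] at hT; omega)
  set S := coordPoint s t ⁻¹' A
  have hAS : coordPoint s t '' S = A := Set.image_preimage_eq_of_subset fun P hP =>
    (exists_eq_coordPoint hW hs ht (hA P hP) (ne_of_mem_of_not_mem hP hTA)).imp fun _ h => h.symm
  have hScard : S.ncard = Fintype.card K ^ (r - 1) := by
    rw [← hAcard, ← hAS, Set.ncard_image_of_injective _ (coordPoint_injective hs ht)]
  obtain ⟨s₀, hs₀⟩ := Set.nonempty_of_ncard_ne_zero (s := S) (by rw [hScard]; positivity)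
  obtain ⟨μ, hμ0, hμ1⟩ := exists_ne_zero_ne_one_of_two_lt_card hq2
  obtain ⟨V, hV⟩ := exists_submodule_of_lineClosed hμ0 hμ1 hs₀ fun a ha b hb c => by
    rcases eq_or_ne a b with rfl | hab
    · rwa [← add_smul, add_sub_cancel, one_smul]
    exact coordPoint_mem_of_sublines_subset hs ht hab
      (hclosed _ ha _ hb ((coordPoint_injective hs ht).ne hab)) c
  have hSV : S = {a | a - s₀ ∈ V} := Set.ext hV
  have hVrank : finrank K V = r - 1 :=
    finrank_eq_of_ncard_setOf_sub_mem (by omega) (hSV ▸ hScard)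
  have : FiniteDimensional K V := Module.finite_of_finrank_pos (by omega)
  have hV0 : V ≠ ⊥ := fun h => by rw [h, finrank_bot] at hVrank; omega
  refine ⟨clubSubspace s t s₀ V, ?_, ?_, ?_⟩
  · rw [finrank_clubSubspace hs ht, hVrank]; omega
  · rw [bSet_clubSubspace hs ht hV0, ← hSV, hAS]
  · rw [clubSubspace_inf_span hs, finrank_map_toSpanSingleton ht, hVrank]

/-- for `q > 2`, if a `(q^{r-1})`-set `A` of points together with a point
`T ∉ A` is closed under `q`-sublines through `T` and two points of `A`, then
`{T} ∪ A` is an `F_q`-club of rank `r` with head `T`. -/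
theorem subline_closed_is_club
    (K L : Type*) [Field K] [Field L] [Algebra K L] [Fintype K] [Fintype L]
    (q r n : ℕ) (hq : Fintype.card K = q) (hq2 : 2 < q)
    (hr : 3 ≤ r) (hrn : r ≤ n) (hrank : Module.finrank K L = n)
    (T : Submodule L (Fin 2 → L)) (hT : Module.finrank L T = 1)
    (A : Set (Submodule L (Fin 2 → L)))
    (hA : ∀ P ∈ A, Module.finrank L P = 1)
    (hAcard : A.ncard = q ^ (r - 1)) (hTA : T ∉ A)
    (hclosed : ∀ P ∈ A, ∀ Q ∈ A, P ≠ Q →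
      ∀ M : Submodule K (Fin 2 → L), Module.finrank K M = 2 →
        (BSet L (M : Set (Fin 2 → L))).ncard = q + 1 →
        T ∈ BSet L (M : Set (Fin 2 → L)) →
        P ∈ BSet L (M : Set (Fin 2 → L)) →
        Q ∈ BSet L (M : Set (Fin 2 → L)) →
        BSet L (M : Set (Fin 2 → L)) ⊆ insert T A) :
    ∃ U₀ : Submodule K (Fin 2 → L), Module.finrank K U₀ = r ∧
      BSet L (U₀ : Set (Fin 2 → L)) = insert T A ∧
      Module.finrank K ↥(U₀ ⊓ T.restrictScalars K) = r - 1 :=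
  subline_closed_is_club_general K L q r hq hq2 hr T hT A hA hAcard hTA hclosed
end

section
/- Let 3 ≤ r ≤ n and let T, U₁, …, U_r be distinct points of PG(1,q^n). Assume that for every j with 3 ≤ j ≤ r and every i with 2 ≤ i < j, there is no tangent splash of rank i with centre T containing all of U₁, …, U_j. Then there exists exactly one tangent splash of rank r with centre T containing U₁, …, U_r; that is, there is a unique point set S of PG(1,q^n) such that S = B(W) for some K-subspace W of L^2 with dim_K W = r and dim_K(W ∩ T) = r-1, and U₁, …, U_r ∈ S. -/
open Submodule Module

lemma exists_span_eq_of_finrank_one {L V : Type*} [Field L] [AddCommGroup V] [Module L V]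
    [FiniteDimensional L V] {P : Submodule L V} (hP : Module.finrank L P = 1) :
    ∃ v, v ≠ 0 ∧ P = span L {v} := by
  have hPne : P ≠ ⊥ := by
    intro h
    rw [h, finrank_bot] at hP
    omega
  obtain ⟨v, hvP, hv0⟩ := Submodule.exists_mem_ne_zero_of_ne_bot hPne
  refine ⟨v, hv0, ?_⟩
  have hle : span L {v} ≤ P := (span_singleton_le_iff_mem v P).2 hvP
  exact (Submodule.eq_of_le_of_finrank_eq hle
    (by rw [finrank_span_singleton hv0, hP])).symm

/-- existence and uniqueness of the tangent splash of rank `r` with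
centre `T` through `r` points in "general position" with respect to `T`. -/
theorem unique_tangent_splash
    (K L : Type*) [Field K] [Field L] [Algebra K L] [Fintype K] [Fintype L]
    (r n : ℕ) (hr : 3 ≤ r) (hrn : r ≤ n) (hrank : Module.finrank K L = n)
    (T : Submodule L (Fin 2 → L)) (hT : Module.finrank L T = 1)
    (U : Fin r → Submodule L (Fin 2 → L))
    (hUpts : ∀ k, Module.finrank L (U k) = 1)
    (hUinj : Function.Injective U) (hUT : ∀ k, U k ≠ T)
    (hgen : ∀ j, 3 ≤ j → j ≤ r → ∀ i, 2 ≤ i → i < j →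
      ¬ ∃ W : Submodule K (Fin 2 → L), Module.finrank K W = i ∧
          Module.finrank K ↥(W ⊓ T.restrictScalars K) = i - 1 ∧
          ∀ k : Fin r, (k : ℕ) < j → U k ∈ BSet L (W : Set (Fin 2 → L))) :
    ∃! S : Set (Submodule L (Fin 2 → L)),
      (∃ W : Submodule K (Fin 2 → L), Module.finrank K W = r ∧
          Module.finrank K ↥(W ⊓ T.restrictScalars K) = r - 1 ∧
          BSet L (W : Set (Fin 2 → L)) = S) ∧
        ∀ k : Fin r, U k ∈ S := by
  haveI : NeZero r := ⟨by omega⟩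
  -- generators of T and U 0
  obtain ⟨t, ht0, hTt⟩ := exists_span_eq_of_finrank_one hT
  obtain ⟨u₁, hu₁0, hU0⟩ := exists_span_eq_of_finrank_one (hUpts 0)
  -- t, u₁ are linearly independent over L
  have hLI : LinearIndependent L ![t, u₁] := by
    rw [LinearIndependent.pair_iff]
    intro s c hsc
    by_cases hc : c = 0
    · subst hc
      rw [zero_smul, add_zero] at hsc
      rcases smul_eq_zero.1 hsc with h | h
      · exact ⟨h, rfl⟩
      · exact absurd h ht0
    · exfalso
      apply hUT 0
      have hu₁T : u₁ ∈ T := by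
        have h1 : c • u₁ = (-s) • t := by
          rw [neg_smul, ← eq_neg_of_add_eq_zero_right hsc]
        have h2 : u₁ = (c⁻¹ * (-s)) • t := by
          rw [← smul_smul, ← h1, smul_smul, inv_mul_cancel₀ hc, one_smul]
        rw [h2, hTt]
        exact smul_mem _ _ (mem_span_singleton_self t)
      have hle : U 0 ≤ T := by
        rw [hU0]
        exact (span_singleton_le_iff_mem u₁ T).2 hu₁T
      exact Submodule.eq_of_le_of_finrank_eq hle (by rw [hUpts 0, hT])
  set Bas : Basis (Fin 2) L (Fin 2 → L) :=
    basisOfLinearIndependentOfCardEqFinrank hLI (by simp [Module.finrank_pi]) with hBas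
  have hB0 : Bas 0 = t := by
    rw [hBas, coe_basisOfLinearIndependentOfCardEqFinrank]
    rfl
  have hB1 : Bas 1 = u₁ := by
    rw [hBas, coe_basisOfLinearIndependentOfCardEqFinrank]
    rfl
  set π : (Fin 2 → L) →ₗ[L] L := Bas.coord 1 with hπdef
  have hπt : π t = 0 := by
    rw [← hB0]
    simp [hπdef, Basis.coord_apply]
  have hπu₁ : π u₁ = 1 := by
    rw [← hB1]
    simp [hπdef, Basis.coord_apply]
  have hπT : ∀ x ∈ T, π x = 0 := by
    intro x hx
    rw [hTt] at hx
    obtain ⟨c, rfl⟩ := mem_span_singleton.1 hx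
    rw [map_smul, hπt, smul_zero]
  have hπgen : ∀ c : L, π (c • t + u₁) = 1 := by
    intro c
    rw [map_add, map_smul, hπt, hπu₁, smul_zero, zero_add]
  have hgen0 : ∀ c : L, c • t + u₁ ≠ 0 := by
    intro c h
    have := hπgen c
    rw [h, map_zero] at this
    exact one_ne_zero this.symm
  -- write each U k as span of (a k) • t + u₁
  have haex : ∀ k : Fin r, ∃ c : L, U k = span L {c • t + u₁} := by
    intro k
    obtain ⟨v, hv0, hUv⟩ := exists_span_eq_of_finrank_one (hUpts k)
    have hexp : v = Bas.repr v 0 • t + Bas.repr v 1 • u₁ := by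
      have h := Bas.sum_repr v
      rw [Fin.sum_univ_two, hB0, hB1] at h
      exact h.symm
    set dd := Bas.repr v 1 with hdd
    have hd : dd ≠ 0 := by
      intro h
      apply hUT k
      have hvT : v ∈ T := by
        rw [hTt, hexp, h, zero_smul, add_zero]
        exact smul_mem _ _ (mem_span_singleton_self t)
      have hle : U k ≤ T := by
        rw [hUv]
        exact (span_singleton_le_iff_mem v T).2 hvT
      exact Submodule.eq_of_le_of_finrank_eq hle (by rw [hUpts k, hT])
    refine ⟨Bas.repr v 0 / dd, ?_⟩
    have heq : (Bas.repr v 0 / dd) • t + u₁ = dd⁻¹ • v := by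
      conv_rhs => rw [hexp]
      rw [smul_add, smul_smul, smul_smul, inv_mul_cancel₀ hd, one_smul, div_eq_inv_mul]
    rw [hUv, heq, span_singleton_smul_eq (IsUnit.inv (Ne.isUnit hd)) v]
  choose a ha using haex
  have hainj : Function.Injective a := by
    intro k l h
    apply hUinj
    rw [ha k, ha l, h]
  set w₀ : Fin 2 → L := a 0 • t + u₁ with hw₀def
  have hw₀0 : w₀ ≠ 0 := hgen0 (a 0)
  -- the embedding L → L² , c ↦ c • t
  set φ : L →ₗ[K] (Fin 2 → L) := (LinearMap.toSpanSingleton L (Fin 2 → L) t).restrictScalars K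
    with hφdef
  have hφap : ∀ c : L, φ c = c • t := fun c => rfl
  have hφinj : Function.Injective φ := by
    intro c e h
    rw [hφap, hφap] at h
    have : (c - e) • t = 0 := by rw [sub_smul, h, sub_self]
    rcases smul_eq_zero.1 this with h' | h'
    · exact sub_eq_zero.1 h'
    · exact absurd h' ht0
  have hrange : LinearMap.range φ = T.restrictScalars K := by
    ext x
    simp only [LinearMap.mem_range, Submodule.restrictScalars_mem, hTt, mem_span_singleton]
    exact ⟨fun ⟨c, hc⟩ => ⟨c, hc⟩, fun ⟨c, hc⟩ => ⟨c, hc⟩⟩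
  -- basic facts about W(M) := map φ M ⊔ span K {w₀}
  have hπK : ∀ (μ : K) (x : Fin 2 → L), π (μ • x) = algebraMap K L μ * π x := by
    intro μ x
    rw [← algebraMap_smul L μ x, map_smul, smul_eq_mul]
  have hfr_map : ∀ M : Submodule K L, finrank K (M.map φ) = finrank K M :=
    fun M => (Submodule.equivMapOfInjective φ hφinj M).finrank_eq.symm
  have hmapT : ∀ M : Submodule K L, M.map φ ≤ T.restrictScalars K := by
    intro M x hx
    obtain ⟨c, _, rfl⟩ := hx
    rw [hφap, Submodule.restrictScalars_mem, hTt]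
    exact smul_mem _ _ (mem_span_singleton_self t)
  have h_inf_T : ∀ M : Submodule K L,
      (M.map φ ⊔ span K {w₀}) ⊓ T.restrictScalars K = M.map φ := by
    intro M
    apply le_antisymm
    · rintro x ⟨hx1, hx2⟩
      obtain ⟨y, hy, z, hz, rfl⟩ := mem_sup.1 hx1
      obtain ⟨μ, rfl⟩ := mem_span_singleton.1 hz
      obtain ⟨c, hc, rfl⟩ := hy
      have hπx : π (φ c + μ • w₀) = 0 := hπT _ (Submodule.restrictScalars_mem K T _ |>.1 hx2)
      rw [map_add, hφap, map_smul, hπt, smul_zero, zero_add, hπK, hw₀def, hπgen,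
        mul_one] at hπx
      have hμ : μ = 0 := by
        have := (map_eq_zero (algebraMap K L)).1 hπx
        exact this
      rw [hμ, zero_smul, add_zero]
      exact ⟨c, hc, rfl⟩
    · exact le_inf le_sup_left (hmapT M)
  have hdisj : ∀ M : Submodule K L, M.map φ ⊓ span K {w₀} = ⊥ := by
    intro M
    rw [eq_bot_iff]
    rintro x ⟨hx1, hx2⟩
    obtain ⟨μ, rfl⟩ := mem_span_singleton.1 hx2
    obtain ⟨c, _, hc⟩ := hx1
    have h0 : π (μ • w₀) = 0 := by
      rw [← hc, hφap, map_smul, hπt, smul_zero]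
    rw [hπK, hw₀def, hπgen, mul_one] at h0
    have hμ : μ = 0 := (map_eq_zero (algebraMap K L)).1 h0
    rw [hμ, zero_smul]
    exact zero_mem _
  have hfr_WM : ∀ M : Submodule K L,
      finrank K ↥(M.map φ ⊔ span K {w₀}) = finrank K M + 1 := by
    intro M
    have h := Submodule.finrank_sup_add_finrank_inf_eq (M.map φ) (span K {w₀})
    rw [hdisj M, finrank_bot, add_zero, hfr_map M, finrank_span_singleton hw₀0] at h
    exact h
  have hmemB : ∀ (M : Submodule K L) (k : Fin r), a k - a 0 ∈ M →
      U k ∈ BSet L ((M.map φ ⊔ span K {w₀} : Submodule K (Fin 2 → L)) : Set (Fin 2 → L)) := by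
    intro M k hk
    refine ⟨a k • t + u₁, ?_, hgen0 (a k), ha k⟩
    have hkey : a k • t + u₁ = φ (a k - a 0) + w₀ := by
      rw [hφap, hw₀def, sub_smul]
      abel
    rw [SetLike.mem_coe, hkey]
    exact add_mem (mem_sup_left (mem_map_of_mem hk)) (mem_sup_right (mem_span_singleton_self w₀))
  -- decomposition of a splash containing w₀
  have hdecomp : ∀ W : Submodule K (Fin 2 → L), w₀ ∈ W →
      finrank K W = finrank K ↥(W ⊓ T.restrictScalars K) + 1 →
      W = (comap φ W).map φ ⊔ span K {w₀} := by
    intro W hw hfr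
    have hmc : (comap φ W).map φ = W ⊓ T.restrictScalars K := by
      rw [Submodule.map_comap_eq, hrange, inf_comm]
    have hle : (comap φ W).map φ ⊔ span K {w₀} ≤ W :=
      sup_le (by rw [hmc]; exact inf_le_left) ((span_singleton_le_iff_mem w₀ W).2 hw)
    refine (Submodule.eq_of_le_of_finrank_eq hle ?_).symm
    rw [hfr_WM, hfr]
    congr 1
    rw [← hfr_map, hmc]
  -- extraction of affine coordinates
  have hextract : ∀ W : Submodule K (Fin 2 → L),
      W = (comap φ W).map φ ⊔ span K {w₀} →
      ∀ k : Fin r, U k ∈ BSet L (W : Set (Fin 2 → L)) → a k - a 0 ∈ comap φ W := by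
    intro W hWeq k hUk
    obtain ⟨x, hxW, hx0, hxsp⟩ := hUk
    have hx_in : x ∈ span L {a k • t + u₁} := by
      rw [← ha k, hxsp]
      exact mem_span_singleton_self x
    obtain ⟨lam, hlam⟩ := mem_span_singleton.1 hx_in
    have hlam0 : lam ≠ 0 := by
      rintro rfl
      rw [zero_smul] at hlam
      exact hx0 hlam.symm
    have hxW' : x ∈ (comap φ W).map φ ⊔ span K {w₀} := hWeq ▸ hxW
    obtain ⟨y, hy, z, hz, hyz⟩ := mem_sup.1 hxW'
    obtain ⟨μ, rfl⟩ := mem_span_singleton.1 hz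
    obtain ⟨c, hcM, rfl⟩ := hy
    have hπx1 : π x = lam := by
      rw [← hlam, map_smul, hπgen, smul_eq_mul, mul_one]
    have hπx2 : π x = algebraMap K L μ := by
      rw [← hyz, map_add, hφap, map_smul, hπt, smul_zero, zero_add, hπK, hw₀def, hπgen, mul_one]
    have hlam_eq : lam = algebraMap K L μ := hπx1.symm.trans hπx2
    have hμ0 : μ ≠ 0 := by
      rintro rfl
      rw [map_zero] at hlam_eq
      exact hlam0 hlam_eq
    have hkey : φ c = (algebraMap K L μ * (a k - a 0)) • t := by
      have h1 : φ c = x - μ • w₀ := eq_sub_of_add_eq hyz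
      rw [h1, ← hlam, hlam_eq, ← algebraMap_smul L μ w₀, ← smul_sub, hw₀def]
      have h2 : (a k • t + u₁) - (a 0 • t + u₁) = (a k - a 0) • t := by
        rw [sub_smul]
        abel
      rw [h2, smul_smul]
    have hc : c = algebraMap K L μ * (a k - a 0) := by
      have h2 : (c - algebraMap K L μ * (a k - a 0)) • t = 0 := by
        rw [sub_smul, ← hφap, hkey, sub_self]
      rcases smul_eq_zero.1 h2 with h' | h'
      · exact sub_eq_zero.1 h'
      · exact absurd h' ht0
    have hfin : a k - a 0 = μ⁻¹ • c := by
      rw [hc, Algebra.smul_def, map_inv₀,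
        inv_mul_cancel_left₀ ((map_ne_zero (algebraMap K L)).2 hμ0)]
    rw [hfin]
    exact Submodule.smul_mem _ μ⁻¹ hcM
  -- the difference family and its linear independence
  set d : Fin (r - 1) → L := fun i => a ⟨i.1 + 1, by have := i.isLt; omega⟩ - a 0 with hddef
  have hind : ∀ m, ∀ hm : m ≤ r - 1,
      LinearIndependent K (fun i : Fin m => d (Fin.castLE hm i)) := by
    intro m
    induction m with
    | zero => intro hm; exact linearIndependent_empty_type
    | succ m ih =>
      intro hm1
      have hm : m ≤ r - 1 := by omega
      have hprev := ih hm
      have hnot : d ⟨m, by omega⟩ ∉ span K (Set.range fun i : Fin m => d (Fin.castLE hm i)) := by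
        intro hmem
        rcases Nat.eq_zero_or_pos m with rfl | hmpos
        · rw [Set.range_eq_empty, span_empty, mem_bot] at hmem
          have h1 : a ⟨0 + 1, by omega⟩ = a 0 := sub_eq_zero.1 hmem
          have h2 := hainj h1
          have h3 := congrArg Fin.val h2
          simp at h3
        · apply hgen (m + 2) (by omega) (by omega) (m + 1) (by omega) (by omega)
          set M := span K (Set.range fun i : Fin m => d (Fin.castLE hm i)) with hMdef
          have hfrM : finrank K M = m := by
            rw [hMdef, finrank_span_eq_card hprev]
            simp
          refine ⟨M.map φ ⊔ span K {w₀}, ?_, ?_, ?_⟩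
          · rw [hfr_WM, hfrM]
          · rw [h_inf_T, hfr_map, hfrM]
            omega
          · intro k hk
            apply hmemB
            rcases Nat.eq_zero_or_pos k.1 with hk0 | hk1
            · have : k = 0 := Fin.ext (by simpa using hk0)
              rw [this, sub_self]
              exact zero_mem _
            · have hkr : k.1 - 1 < r - 1 := by omega
              have hkk : (⟨(k.1 - 1) + 1, by omega⟩ : Fin r) = k := Fin.ext (by simp; omega)
              have hdk : a k - a 0 = d ⟨k.1 - 1, hkr⟩ := by
                rw [hddef]
                simp only
                rw [hkk]
              rw [hdk]
              rcases lt_or_eq_of_le (show k.1 - 1 ≤ m by omega) with hlt | heq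
              · apply subset_span
                exact ⟨⟨k.1 - 1, hlt⟩, rfl⟩
              · have hcast : (⟨k.1 - 1, hkr⟩ : Fin (r - 1)) = ⟨m, by omega⟩ := Fin.ext heq
                rw [hcast]
                exact hmem
      have hsnoc : (fun i : Fin (m + 1) => d (Fin.castLE hm1 i)) =
          Fin.snoc (fun i : Fin m => d (Fin.castLE hm i)) (d ⟨m, by omega⟩) := by
        funext i
        refine Fin.lastCases ?_ ?_ i
        · rw [Fin.snoc_last]
          congr 1
        · intro j
          rw [Fin.snoc_castSucc]
          congr 1
      rw [hsnoc]
      exact linearIndependent_fin_snoc.2 ⟨hprev, hnot⟩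
  have hd_indep : LinearIndependent K d := by
    have h := hind (r - 1) le_rfl
    have he : (fun i : Fin (r - 1) => d (Fin.castLE le_rfl i)) = d :=
      funext fun i => congrArg d (Fin.ext rfl)
    rwa [he] at h
  -- the canonical splash
  set M₀ : Submodule K L := span K (Set.range d) with hM₀def
  have hfrM₀ : finrank K M₀ = r - 1 := by
    rw [hM₀def, finrank_span_eq_card hd_indep]
    simp
  set W₀ : Submodule K (Fin 2 → L) := M₀.map φ ⊔ span K {w₀} with hW₀def
  have hallk : ∀ k : Fin r, a k - a 0 ∈ M₀ := by
    intro k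
    rcases Nat.eq_zero_or_pos k.1 with hk0 | hk1
    · have : k = 0 := Fin.ext (by simpa using hk0)
      rw [this, sub_self]
      exact zero_mem _
    · have hkr : k.1 - 1 < r - 1 := by have := k.isLt; omega
      have hkk : (⟨(k.1 - 1) + 1, by have := k.isLt; omega⟩ : Fin r) = k := Fin.ext (by simp; omega)
      have hdk : a k - a 0 = d ⟨k.1 - 1, hkr⟩ := by
        rw [hddef]
        simp only
        rw [hkk]
      rw [hdk]
      exact subset_span ⟨⟨k.1 - 1, hkr⟩, rfl⟩
  refine ⟨BSet L (W₀ : Set (Fin 2 → L)), ⟨⟨W₀, ?_, ?_, rfl⟩, fun k => hmemB M₀ k (hallk k)⟩, ?_⟩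
  · rw [hW₀def, hfr_WM, hfrM₀]
    omega
  · rw [hW₀def, h_inf_T, hfr_map, hfrM₀]
  -- uniqueness
  rintro S ⟨⟨W, hWr, hWinf, rfl⟩, hUS⟩
  obtain ⟨x, hxW, hx0, hxsp⟩ := hUS 0
  have hx_in : x ∈ span L {w₀} := by
    rw [← ha 0, hxsp]
    exact mem_span_singleton_self x
  obtain ⟨lam, hlam⟩ := mem_span_singleton.1 hx_in
  have hlam0 : lam ≠ 0 := by
    rintro rfl
    rw [zero_smul] at hlam
    exact hx0 hlam.symm
  set ec : (Fin 2 → L) →ₗ[K] (Fin 2 → L) :=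
    (LinearMap.lsmul L (Fin 2 → L) lam⁻¹).restrictScalars K with hecdef
  have hecap : ∀ v : Fin 2 → L, ec v = lam⁻¹ • v := fun v => rfl
  have hecinj : Function.Injective ec := by
    intro v w h
    rw [hecap, hecap] at h
    exact smul_right_injective _ (inv_ne_zero hlam0) h
  set W' : Submodule K (Fin 2 → L) := W.map ec with hW'def
  have hW'fr : finrank K W' = r := by
    rw [hW'def, ← (Submodule.equivMapOfInjective ec hecinj W).finrank_eq, hWr]
  have hmapTec : (T.restrictScalars K).map ec = T.restrictScalars K := by
    apply le_antisymm
    · rintro x ⟨y, hy, rfl⟩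
      rw [hecap]
      exact Submodule.smul_mem _ _ hy
    · intro x hx
      refine ⟨lam • x, Submodule.smul_mem _ _ hx, ?_⟩
      rw [hecap, smul_smul, inv_mul_cancel₀ hlam0, one_smul]
  have hW'inf : W' ⊓ T.restrictScalars K = (W ⊓ T.restrictScalars K).map ec := by
    rw [Submodule.map_inf ec hecinj, hmapTec]
  have hW'infr : finrank K ↥(W' ⊓ T.restrictScalars K) = r - 1 := by
    rw [hW'inf, ← (Submodule.equivMapOfInjective ec hecinj _).finrank_eq, hWinf]
  have hw₀W' : w₀ ∈ W' := by
    refine ⟨x, hxW, ?_⟩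
    rw [hecap, ← hlam, smul_smul, inv_mul_cancel₀ hlam0, one_smul]
  have hBW' : BSet L (W' : Set (Fin 2 → L)) = BSet L (W : Set (Fin 2 → L)) := by
    ext P
    constructor
    · rintro ⟨v, hv, hv0, rfl⟩
      obtain ⟨y, hy, rfl⟩ := hv
      rw [hecap] at hv0 ⊢
      refine ⟨y, hy, ?_, ?_⟩
      · intro h
        rw [h, smul_zero] at hv0
        exact hv0 rfl
      · rw [span_singleton_smul_eq (Ne.isUnit (inv_ne_zero hlam0)) y]
    · rintro ⟨v, hv, hv0, rfl⟩
      refine ⟨lam⁻¹ • v, ⟨v, hv, (hecap v).symm ▸ rfl⟩, smul_ne_zero (inv_ne_zero hlam0) hv0, ?_⟩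
      rw [span_singleton_smul_eq (Ne.isUnit (inv_ne_zero hlam0)) v]
  have hdec := hdecomp W' hw₀W' (by rw [hW'fr, hW'infr]; omega)
  set M' : Submodule K L := comap φ W' with hM'def
  have hmc : M'.map φ = W' ⊓ T.restrictScalars K := by
    rw [hM'def, Submodule.map_comap_eq, hrange, inf_comm]
  have hM'fr : finrank K M' = r - 1 := by
    rw [← hfr_map M', hmc, hW'infr]
  have hM₀le : M₀ ≤ M' := by
    rw [hM₀def, span_le]
    rintro _ ⟨i, rfl⟩
    exact hextract W' hdec ⟨i.1 + 1, by have := i.isLt; omega⟩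
      (hBW'.symm ▸ hUS ⟨i.1 + 1, by have := i.isLt; omega⟩)
  have hM'eq : M₀ = M' := Submodule.eq_of_le_of_finrank_eq hM₀le (by rw [hfrM₀, hM'fr])
  rw [← hBW', hdec, ← hM'eq, ← hW₀def]
end

section
/- Let n ≥ 3 and let T, U, V, W be four distinct points of PG(1,q^n) such that W does not lie on the unique q-subline through T, U, V (equivalently, for every 2-dimensional K-subspace M of L^2 with |B(M)| = q+1 and T, U, V ∈ B(M), one has W ∉ B(M)). Then there exists exactly one tangent splash of rank 3 with centre T containing U, V and W; that is, there is a unique point set S of PG(1,q^n) such that S = B(X) for some K-subspace X of L^2 with dim_K X = 3 and dim_K(X ∩ T) = 2, and U, V, W ∈ S. -/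
open Submodule Module

lemma exists_span_singleton_of_finrank_one {L M : Type*} [Field L] [AddCommGroup M]
    [Module L M] [FiniteDimensional L M] (T : Submodule L M) (hT : finrank L T = 1) :
    ∃ t : M, t ≠ 0 ∧ T = span L {t} := by
  have hbot : T ≠ ⊥ := by
    intro h
    rw [h, finrank_bot] at hT
    exact one_ne_zero hT.symm
  obtain ⟨t, htT, ht0⟩ := T.ne_bot_iff.mp hbot
  have hle : span L {t} ≤ T := (span_singleton_le_iff_mem t T).mpr htT
  refine ⟨t, ht0, (Submodule.eq_of_le_of_finrank_eq hle ?_).symm⟩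
  rw [finrank_span_singleton ht0, hT]

/-- through four distinct points `T`, `U`, `V`, `W` of `PG(1,q^n)` with
`W` not on the `q`-subline through `T`, `U`, `V`, there is a unique tangent splash
of rank `3` (i.e. of a `q`-subplane) with centre `T` containing `U`, `V`, `W`. -/
theorem unique_tangent_splash_rank_three
    (K L : Type*) [Field K] [Field L] [Algebra K L] [Fintype K] [Fintype L]
    (q n : ℕ) (hq : Fintype.card K = q) (hn : 3 ≤ n)
    (hrank : Module.finrank K L = n)
    (T U V W : Submodule L (Fin 2 → L))
    (hT : Module.finrank L T = 1) (hU : Module.finrank L U = 1)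
    (hV : Module.finrank L V = 1) (hW : Module.finrank L W = 1)
    (hTU : T ≠ U) (hTV : T ≠ V) (hTW : T ≠ W)
    (hUV : U ≠ V) (hUW : U ≠ W) (hVW : V ≠ W)
    (hsubline : ∀ M : Submodule K (Fin 2 → L), Module.finrank K M = 2 →
      (BSet L (M : Set (Fin 2 → L))).ncard = q + 1 →
      T ∈ BSet L (M : Set (Fin 2 → L)) →
      U ∈ BSet L (M : Set (Fin 2 → L)) →
      V ∈ BSet L (M : Set (Fin 2 → L)) →
      W ∉ BSet L (M : Set (Fin 2 → L))) :
    ∃! S : Set (Submodule L (Fin 2 → L)),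
      (∃ X : Submodule K (Fin 2 → L), Module.finrank K X = 3 ∧
          Module.finrank K ↥(X ⊓ T.restrictScalars K) = 2 ∧
          BSet L (X : Set (Fin 2 → L)) = S) ∧
        U ∈ S ∧ V ∈ S ∧ W ∈ S := by

  haveI : FiniteDimensional K (Fin 2 → L) := Module.finite_iff_finite.mpr inferInstance
  obtain ⟨t, ht0, hTt⟩ := exists_span_singleton_of_finrank_one T hT
  obtain ⟨u, hu0, hUu⟩ := exists_span_singleton_of_finrank_one U hU
  obtain ⟨v, hv0, hVv⟩ := exists_span_singleton_of_finrank_one V hV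
  obtain ⟨w, hw0, hWw⟩ := exists_span_singleton_of_finrank_one W hW
  -- coefficients w.r.t. u, t
  have hco : ∀ a b : L, a • u + b • t = 0 → a = 0 ∧ b = 0 := by
    intro a b h
    rcases eq_or_ne a 0 with ha | ha
    · subst ha
      rw [zero_smul, zero_add] at h
      exact ⟨rfl, by simpa [ht0] using smul_eq_zero.mp h⟩
    · exfalso
      have hu : u = (-(a⁻¹ * b)) • t := by
        have := eq_neg_of_add_eq_zero_left h
        calc u = a⁻¹ • (a • u) := by rw [smul_smul, inv_mul_cancel₀ ha, one_smul]
        _ = a⁻¹ • (-(b • t)) := by rw [this]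
        _ = (-(a⁻¹ * b)) • t := by rw [smul_neg, smul_smul, neg_smul]
      have hle : U ≤ T := by
        rw [hUu, hTt, span_singleton_le_iff_mem, hu]
        exact smul_mem _ _ (mem_span_singleton_self t)
      exact hTU (Submodule.eq_of_le_of_finrank_eq hle (by rw [hU, hT])).symm
  have hne : ∀ k : L, u + k • t ≠ 0 := by
    intro k h
    exact one_ne_zero (hco 1 k (by simpa using h)).1
  -- u, t span everything
  have hLIut : LinearIndependent L ![u, t] := by
    rw [linearIndependent_fin2]
    refine ⟨by simpa using ht0, fun a h => ?_⟩
    simp only [Matrix.cons_val_one, Matrix.head_cons, Matrix.cons_val_zero] at h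
    have := hco 1 (-a) (by rw [one_smul, neg_smul, ← h]; exact add_neg_cancel _)
    exact one_ne_zero this.1
  have htop : span L (Set.range ![u, t]) = ⊤ := by
    apply Submodule.eq_top_of_finrank_eq
    rw [finrank_span_eq_card hLIut]
    simp [Module.finrank_fin_fun]
  have hcoord : ∀ x : Fin 2 → L, ∃ a b : L, a • u + b • t = x := by
    intro x
    have : x ∈ span L (Set.range ![u, t]) := htop ▸ mem_top
    rw [mem_span_range_iff_exists_fun] at this
    obtain ⟨c, hc⟩ := this
    exact ⟨c 0, c 1, by simpa [Fin.sum_univ_two] using hc⟩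
  -- normalize v and w
  have hnorm : ∀ (P : Submodule L (Fin 2 → L)) (x : Fin 2 → L), x ≠ 0 → P = span L {x} →
      T ≠ P → U ≠ P → ∃ δ : L, δ ≠ 0 ∧ P = span L {u + δ • t} := by
    intro P x hx0 hPx hTP hUP
    obtain ⟨a, b, hab⟩ := hcoord x
    have ha : a ≠ 0 := by
      intro h
      subst h
      rw [zero_smul, zero_add] at hab
      have hb : b ≠ 0 := by rintro rfl; rw [zero_smul] at hab; exact hx0 hab.symm
      apply hTP
      have hle : P ≤ T := by
        rw [hPx, hTt, span_singleton_le_iff_mem, ← hab]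
        exact smul_mem _ _ (mem_span_singleton_self t)
      exact (Submodule.eq_of_le_of_finrank_eq hle
        (by rw [hPx, finrank_span_singleton hx0, hT])).symm
    have hb : b ≠ 0 := by
      intro h
      subst h
      rw [zero_smul, add_zero] at hab
      apply hUP
      have hle : P ≤ U := by
        rw [hPx, hUu, span_singleton_le_iff_mem, ← hab]
        exact smul_mem _ _ (mem_span_singleton_self u)
      exact (Submodule.eq_of_le_of_finrank_eq hle
        (by rw [hPx, finrank_span_singleton hx0, hU])).symm
    refine ⟨b / a, div_ne_zero hb ha, ?_⟩
    have hx : x = a • (u + (b / a) • t) := by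
      rw [smul_add, smul_smul, mul_div_cancel₀ b ha, hab]
    rw [hPx, hx]
    exact span_singleton_smul_eq (IsUnit.mk0 a ha) _
  obtain ⟨β, hβ0, hVβ⟩ := hnorm V v hv0 hVv hTV hUV
  obtain ⟨γ, hγ0, hWγ⟩ := hnorm W w hw0 hWw hTW hUW
  have hβγ : β ≠ γ := by
    rintro rfl
    exact hVW (hVβ.trans hWγ.symm)
  -- span equality helper: span L {u + δ • t} determines δ
  have hspan_inj : ∀ δ δ' : L, span L {u + δ • t} = span L ({u + δ' • t} : Set (Fin 2 → L)) → δ = δ' := by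
    intro δ δ' h
    have : u + δ • t ∈ span L ({u + δ' • t} : Set (Fin 2 → L)) := h ▸ mem_span_singleton_self _
    obtain ⟨μ, hμ⟩ := mem_span_singleton.mp this
    have h2 : (μ - 1) • u + (μ * δ' - δ) • t = 0 := by
      linear_combination (norm := module) hμ
    obtain ⟨h3, h4⟩ := hco _ _ h2
    have hμ1 : μ = 1 := by linear_combination h3
    rw [hμ1, one_mul] at h4
    linear_combination -h4
  set φ := algebraMap K L with hφ
  have hφinj : Function.Injective φ := (algebraMap K L).injective
  have hsmul : ∀ (k : K) (x : Fin 2 → L), k • x = φ k • x :=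
    fun k x => (algebraMap_smul L k x).symm
  have hβt0 : β • t ≠ 0 := smul_ne_zero hβ0 ht0
  have hKind : ∀ c : K, γ ≠ φ c * β := by
    intro c hc
    set M : Submodule K (Fin 2 → L) := span K (Set.range ![u, β • t]) with hM
    have hLI : LinearIndependent K ![u, β • t] := by
      rw [linearIndependent_fin2]
      refine ⟨by simpa using hβt0, fun a h => ?_⟩
      simp only [Matrix.cons_val_one, Matrix.head_cons, Matrix.cons_val_zero] at h
      rw [hsmul, smul_smul] at h
      have := hco 1 (-(φ a * β)) (by rw [one_smul, neg_smul, ← h]; exact add_neg_cancel _)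
      exact one_ne_zero this.1
    have hrk : finrank K M = 2 := by rw [hM, finrank_span_eq_card hLI]; simp
    have humem : u ∈ M := subset_span ⟨0, rfl⟩
    have hβtmem : β • t ∈ M := subset_span ⟨1, rfl⟩
    have hmemM : ∀ x, x ∈ M ↔ ∃ a b : K, φ a • u + (φ b * β) • t = x := by
      intro x
      rw [hM, mem_span_range_iff_exists_fun]
      constructor
      · rintro ⟨cc, hcc⟩
        refine ⟨cc 0, cc 1, ?_⟩
        rw [← hcc, Fin.sum_univ_two]
        simp [hsmul, smul_smul]
      · rintro ⟨a, b, hab⟩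
        refine ⟨![a, b], ?_⟩
        rw [Fin.sum_univ_two, ← hab]
        simp [hsmul, smul_smul]
    set g : Option K → Submodule L (Fin 2 → L) :=
      fun o => o.elim (span L {β • t}) (fun k => span L {u + (φ k * β) • t}) with hg
    have hgnone : ∀ k : K, g none ≠ g (some k) := by
      intro k h
      have h' : span L ({β • t} : Set (Fin 2 → L)) = span L {u + (φ k * β) • t} := h
      have : u + (φ k * β) • t ∈ span L ({β • t} : Set (Fin 2 → L)) :=
        h' ▸ mem_span_singleton_self _
      obtain ⟨μ, hμ⟩ := mem_span_singleton.mp this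
      have h2 : (1 : L) • u + (φ k * β - μ * β) • t = 0 := by
        linear_combination (norm := module) -hμ
      exact one_ne_zero (hco _ _ h2).1
    have hginj : Function.Injective g := by
      intro o o' h
      match o, o' with
      | none, none => rfl
      | none, some k => exact absurd h (hgnone k)
      | some k, none => exact absurd h.symm (hgnone k)
      | some k, some k' =>
        have h' : span L ({u + (φ k * β) • t} : Set (Fin 2 → L)) = span L {u + (φ k' * β) • t} := h
        have := hspan_inj _ _ h'
        have := mul_right_cancel₀ hβ0 this
        rw [hφinj this]
    have hBM : BSet L (M : Set (Fin 2 → L)) = Set.range g := by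
      ext P
      constructor
      · rintro ⟨x, hx, hx0, rfl⟩
        rw [SetLike.mem_coe, hmemM] at hx
        obtain ⟨a, b, hab⟩ := hx
        rcases eq_or_ne a 0 with ha | ha
        · have hxe : x = φ b • (β • t) := by
            rw [smul_smul, ← hab, ha]; simp
          have hb : φ b ≠ 0 := by
            intro h
            rw [h, zero_smul] at hxe
            exact hx0 hxe
          refine ⟨none, ?_⟩
          show span L {β • t} = span L {x}
          rw [hxe, span_singleton_smul_eq (IsUnit.mk0 _ hb)]
        · have hφa : φ a ≠ 0 := fun h => ha (hφinj (by rw [h, map_zero]))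
          have hcoef : φ a * (φ (b / a) * β) = φ b * β := by
            rw [map_div₀]; field_simp
          have hxe : x = φ a • (u + (φ (b / a) * β) • t) := by
            rw [smul_add, smul_smul, hcoef, hab]
          refine ⟨some (b / a), ?_⟩
          show span L {u + (φ (b / a) * β) • t} = span L {x}
          rw [hxe, span_singleton_smul_eq (IsUnit.mk0 _ hφa)]
      · rintro ⟨o, rfl⟩
        match o with
        | none => exact ⟨β • t, hβtmem, hβt0, rfl⟩
        | some k =>
          refine ⟨u + (φ k * β) • t, ?_, hne _, rfl⟩
          rw [SetLike.mem_coe, hmemM]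
          exact ⟨1, k, by simp⟩
    have hcard : (BSet L (M : Set (Fin 2 → L))).ncard = q + 1 := by
      rw [hBM, ← Nat.card_coe_set_eq,
        Nat.card_congr (Equiv.ofInjective g hginj).symm, Nat.card_eq_fintype_card,
        Fintype.card_option, hq]
    have hTmem : T ∈ BSet L (M : Set (Fin 2 → L)) :=
      ⟨β • t, hβtmem, hβt0, by rw [hTt, span_singleton_smul_eq (IsUnit.mk0 β hβ0)]⟩
    have hUmem : U ∈ BSet L (M : Set (Fin 2 → L)) := ⟨u, humem, hu0, hUu⟩
    have hVmem : V ∈ BSet L (M : Set (Fin 2 → L)) := by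
      refine ⟨u + β • t, add_mem humem hβtmem, hne β, hVβ⟩
    have hWmem : W ∈ BSet L (M : Set (Fin 2 → L)) := by
      refine ⟨u + γ • t, ?_, hne γ, hWγ⟩
      rw [SetLike.mem_coe, hmemM]
      exact ⟨1, c, by rw [← hc]; simp⟩
    exact hsubline M hrk hcard hTmem hUmem hVmem hWmem
  -- linear independence of the three generators over K
  have hγt0 : γ • t ≠ 0 := smul_ne_zero hγ0 ht0
  have hLI3 : LinearIndependent K ![u, β • t, γ • t] := by
    rw [Fintype.linearIndependent_iff]
    intro gg hgg
    rw [Fin.sum_univ_three] at hgg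
    have hgg' : φ (gg 0) • u + φ (gg 1) • β • t + φ (gg 2) • γ • t = 0 := by
      simpa [hsmul] using hgg
    have h0 : φ (gg 0) • u + (φ (gg 1) * β + φ (gg 2) * γ) • t = 0 := by
      linear_combination (norm := module) hgg'
    obtain ⟨e0, e12⟩ := hco _ _ h0
    have h22 : gg 2 = 0 := by
      by_contra hgg2
      have hφ2 : φ (gg 2) ≠ 0 := fun h => hgg2 (hφinj (by rw [h, map_zero]))
      exact hKind (-(gg 1 / gg 2)) (by rw [map_neg, map_div₀]; field_simp; linear_combination e12)
    have h11 : gg 1 = 0 := by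
      apply hφinj; rw [map_zero]
      rw [h22, map_zero, zero_mul, add_zero] at e12
      exact (mul_eq_zero.mp e12).resolve_right hβ0
    have h00 : gg 0 = 0 := hφinj (by rw [e0, map_zero])
    intro i; fin_cases i
    · exact h00
    · exact h11
    · exact h22
  set X : Submodule K (Fin 2 → L) := span K (Set.range ![u, β • t, γ • t]) with hXdef
  have hX3 : finrank K X = 3 := by rw [hXdef, finrank_span_eq_card hLI3]; simp
  have humemX : u ∈ X := subset_span ⟨0, rfl⟩
  have hβtX : β • t ∈ X := subset_span ⟨1, rfl⟩
  have hγtX : γ • t ∈ X := subset_span ⟨2, rfl⟩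
  have htmemT : t ∈ T := by rw [hTt]; exact mem_span_singleton_self t
  have hLI2 : LinearIndependent K ![β • t, γ • t] := by
    rw [linearIndependent_fin2]
    refine ⟨by simpa using hγt0, fun a h => ?_⟩
    simp only [Matrix.cons_val_one, Matrix.head_cons, Matrix.cons_val_zero] at h
    rw [hsmul, smul_smul] at h
    have hβγa : (φ a * γ - β) • t = 0 := by linear_combination (norm := module) h
    have heq : φ a * γ = β := by
      rcases smul_eq_zero.mp hβγa with h' | h'
      · linear_combination h'
      · exact absurd h' ht0
    have ha0 : a ≠ 0 := by rintro rfl; rw [map_zero, zero_mul] at heq; exact hβ0 heq.symm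
    have hφa : φ a ≠ 0 := fun h => ha0 (hφinj (by rw [h, map_zero]))
    exact hKind a⁻¹ (by rw [map_inv₀]; field_simp; linear_combination heq)
  have hXT : X ⊓ T.restrictScalars K = span K (Set.range ![β • t, γ • t]) := by
    apply le_antisymm
    · intro x hx
      rw [mem_inf] at hx
      obtain ⟨hxX, hxT⟩ := hx
      rw [hXdef, mem_span_range_iff_exists_fun] at hxX
      obtain ⟨cc, hcc⟩ := hxX
      rw [Fin.sum_univ_three] at hcc
      have hcc' : φ (cc 0) • u + φ (cc 1) • β • t + φ (cc 2) • γ • t = x := by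
        simpa [hsmul] using hcc
      have hxT' : x ∈ T := hxT
      rw [hTt] at hxT'
      obtain ⟨μ, hμ⟩ := mem_span_singleton.mp hxT'
      have h0 : φ (cc 0) • u + (φ (cc 1) * β + φ (cc 2) * γ - μ) • t = 0 := by
        linear_combination (norm := module) hcc' - hμ
      have e0 := (hco _ _ h0).1
      rw [e0, zero_smul, zero_add] at hcc'
      rw [← hcc', ← hsmul, ← hsmul]
      exact add_mem (smul_mem _ _ (subset_span ⟨0, rfl⟩)) (smul_mem _ _ (subset_span ⟨1, rfl⟩))
    · rw [span_le]
      rintro x ⟨i, rfl⟩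
      fin_cases i
      · exact mem_inf.mpr ⟨hβtX, (Submodule.restrictScalars_mem K T _).mpr (T.smul_mem β htmemT)⟩
      · exact mem_inf.mpr ⟨hγtX, (Submodule.restrictScalars_mem K T _).mpr (T.smul_mem γ htmemT)⟩
  have hXT2 : finrank K ↥(X ⊓ T.restrictScalars K) = 2 := by
    rw [hXT, finrank_span_eq_card hLI2]; simp
  have hUX : U ∈ BSet L (X : Set (Fin 2 → L)) := ⟨u, humemX, hu0, hUu⟩
  have hVX : V ∈ BSet L (X : Set (Fin 2 → L)) :=
    ⟨u + β • t, add_mem humemX hβtX, hne β, hVβ⟩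
  have hWX : W ∈ BSet L (X : Set (Fin 2 → L)) :=
    ⟨u + γ • t, add_mem humemX hγtX, hne γ, hWγ⟩
  refine ⟨BSet L (X : Set (Fin 2 → L)), ⟨⟨X, hX3, hXT2, rfl⟩, hUX, hVX, hWX⟩, ?_⟩
  -- uniqueness
  rintro S' ⟨⟨X', h3', h2', rfl⟩, hU', hV', hW'⟩
  obtain ⟨u', hu'X, hu'0, hu'span⟩ := hU'
  have hu'U : u' ∈ U := by rw [hu'span]; exact mem_span_singleton_self u'
  rw [hUu] at hu'U
  obtain ⟨lam, hlam⟩ := mem_span_singleton.mp hu'U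
  have hlam0 : lam ≠ 0 := by rintro rfl; rw [zero_smul] at hlam; exact hu'0 hlam.symm
  have hlamuX' : lam • u ∈ X' := by rw [hlam]; exact hu'X
  have hsup : (X' ⊓ T.restrictScalars K) ⊔ span K {lam • u} = X' := by
    have hle : (X' ⊓ T.restrictScalars K) ⊔ span K {lam • u} ≤ X' :=
      sup_le inf_le_left ((span_singleton_le_iff_mem _ _).mpr hlamuX')
    apply Submodule.eq_of_le_of_finrank_eq hle
    have hint : (X' ⊓ T.restrictScalars K) ⊓ span K {lam • u} = ⊥ := by
      rw [eq_bot_iff]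
      rintro x ⟨⟨hx1, hx2⟩, hx3⟩
      obtain ⟨k, hk⟩ := mem_span_singleton.mp hx3
      have hk' : (φ k * lam) • u = x := by rw [← hk, hsmul, smul_smul]
      have hxT : x ∈ T := hx2
      rw [hTt] at hxT
      obtain ⟨μ, hμ⟩ := mem_span_singleton.mp hxT
      have h0 : (φ k * lam) • u + (-μ) • t = 0 := by
        linear_combination (norm := module) hk' - hμ
      have := (hco _ _ h0).1
      have hk0 : φ k = 0 := by
        rcases mul_eq_zero.mp this with h' | h'
        · exact h'
        · exact absurd h' hlam0
      have : x = 0 := by rw [← hk', hk0, zero_mul, zero_smul]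
      simp [this]
    have h1 : finrank K ↥(span K {lam • u}) = 1 :=
      finrank_span_singleton (smul_ne_zero hlam0 hu0)
    have hd := Submodule.finrank_sup_add_finrank_inf_eq (X' ⊓ T.restrictScalars K)
      (span K {lam • u})
    rw [hint, finrank_bot, h2', h1] at hd
    rw [h3']
    omega
  have hgen : ∀ δ : L, (∃ x ∈ (X' : Set (Fin 2 → L)), x ≠ 0 ∧ span L {u + δ • t} = span L {x}) →
      lam • (δ • t) ∈ X' := by
    rintro δ ⟨x, hxX', hx0, hxs⟩
    have hx' : x ∈ span L {u + δ • t} := hxs ▸ mem_span_singleton_self x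
    obtain ⟨ν, hν⟩ := mem_span_singleton.mp hx'
    have hν0 : ν ≠ 0 := by rintro rfl; rw [zero_smul] at hν; exact hx0 hν.symm
    have hxsup : x ∈ (X' ⊓ T.restrictScalars K) ⊔ span K {lam • u} := by rw [hsup]; exact hxX'
    obtain ⟨y, hy, z, hz, hyz⟩ := mem_sup.mp hxsup
    obtain ⟨k, hk⟩ := mem_span_singleton.mp hz
    have hk' : (φ k * lam) • u = z := by rw [← hk, hsmul, smul_smul]
    have hyT : y ∈ T := hy.2
    rw [hTt] at hyT
    obtain ⟨μ, hμ⟩ := mem_span_singleton.mp hyT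
    have heq : (ν - φ k * lam) • u + (ν * δ - μ) • t = 0 := by
      linear_combination (norm := module) hν - hyz - hμ - hk'
    obtain ⟨e1, e2⟩ := hco _ _ heq
    have hνk : ν = φ k * lam := by linear_combination e1
    have hk0 : k ≠ 0 := by
      rintro rfl; rw [map_zero, zero_mul] at hνk; exact hν0 hνk
    have hφk : φ k ≠ 0 := fun h => hk0 (hφinj (by rw [h, map_zero]))
    have hyX' : k⁻¹ • y ∈ X' := X'.smul_mem _ hy.1
    have hμ' : μ = ν * δ := by linear_combination -e2
    have hfinal : lam • (δ • t) = k⁻¹ • y := by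
      rw [hsmul, ← hμ, smul_smul, smul_smul, hμ', hνk, map_inv₀]
      congr 1
      field_simp
    rw [hfinal]; exact hyX'
  have hβ' : lam • (β • t) ∈ X' := by
    apply hgen β
    obtain ⟨x, hx, h0, hs⟩ := hV'
    exact ⟨x, hx, h0, by rw [← hVβ]; exact hs⟩
  have hγ' : lam • (γ • t) ∈ X' := by
    apply hgen γ
    obtain ⟨x, hx, h0, hs⟩ := hW'
    exact ⟨x, hx, h0, by rw [← hWγ]; exact hs⟩
  set f : (Fin 2 → L) →ₗ[K] (Fin 2 → L) :=
    (LinearMap.lsmul L (Fin 2 → L) lam).restrictScalars K with hfdef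
  have hfapp : ∀ x : Fin 2 → L, f x = lam • x := fun x => rfl
  have hfinj : Function.Injective f := fun x y h =>
    smul_right_injective (Fin 2 → L) hlam0 h
  have hfker : LinearMap.ker f = ⊥ := LinearMap.ker_eq_bot.mpr hfinj
  have hcomp : f ∘ ![u, β • t, γ • t] = ![lam • u, lam • (β • t), lam • (γ • t)] := by
    funext i; fin_cases i <;> rfl
  have hLI3' : LinearIndependent K ![lam • u, lam • (β • t), lam • (γ • t)] := by
    rw [← hcomp]; exact hLI3.map' f hfker
  have hYX' : span K (Set.range ![lam • u, lam • (β • t), lam • (γ • t)]) = X' := by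
    apply Submodule.eq_of_le_of_finrank_eq
    · rw [span_le]
      rintro x ⟨i, rfl⟩
      fin_cases i
      · exact hlamuX'
      · exact hβ'
      · exact hγ'
    · rw [finrank_span_eq_card hLI3', h3']; simp
  have hXmap : Submodule.map f X = X' := by
    rw [hXdef, Submodule.map_span, ← Set.range_comp, hcomp, hYX']
  ext P
  constructor
  · rintro ⟨x, hx, hx0, rfl⟩
    rw [SetLike.mem_coe, ← hXmap, Submodule.mem_map] at hx
    obtain ⟨y, hyX, rfl⟩ := hx
    have hy0 : y ≠ 0 := by rintro rfl; exact hx0 (map_zero f)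
    refine ⟨y, hyX, hy0, ?_⟩
    rw [hfapp]
    exact span_singleton_smul_eq (IsUnit.mk0 lam hlam0) y
  · rintro ⟨y, hy, hy0, rfl⟩
    refine ⟨lam • y, ?_, smul_ne_zero hlam0 hy0,
      (span_singleton_smul_eq (IsUnit.mk0 lam hlam0) y).symm⟩
    rw [SetLike.mem_coe, ← hXmap]
    exact ⟨y, hy, rfl⟩
end

section
/- Let 3 ≤ r ≤ n and fix a point T of PG(1,q^n). The number of distinct point sets of PG(1,q^n) that are tangent splashes of rank r with centre T, i.e. of the form B(W) for some K-subspace W of L^2 with dim_K W = r and dim_K(W ∩ T) = r-1, equals q^{n+1-r} · ∏_{i=0}^{r-2} (q^{n-i} - 1)/(q^{r-1-i} - 1). -/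
/-!
Choose a basis `b` of `L²` with `T = ⟨b 0⟩`. Every point other than `T` is `⟨b 1 + x • b 0⟩` for a
unique `x ∈ L`. A `K`-subspace `W` of rank `r` meeting `T` in rank `r - 1` is `U • b 0 ⊕ K g` with
`g ∉ T`, and then `B(W) = {T} ∪ {⟨b 1 + x • b 0⟩ | g₁ x - g₀ ∈ U}` where `gᵢ = b.coord i g`.
So tangent splashes with centre `T` correspond to the cosets of the `(r - 1)`-dimensional
`K`-subspaces of `L`; there are `q ^ (n - r + 1)` cosets of each such subspace, and the subspaces
are counted through linearly independent tuples, giving the Gaussian binomial.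
-/

open Submodule Module

section SubmoduleCount

variable {K V : Type*} [Field K] [Fintype K] [AddCommGroup V] [Module K V] [Finite V]

def linearIndependentSpanEquiv {k : ℕ} (U : {U : Submodule K V // finrank K U = k}) :
    {s : {s : Fin k → V // LinearIndependent K s} //
        span K (Set.range s.1) = U.1} ≃ {t : Fin k → U.1 // LinearIndependent K t} where
  toFun s := ⟨fun i => ⟨s.1.1 i, s.2.le (subset_span ⟨i, rfl⟩)⟩,
    s.1.2.of_comp U.1.subtype⟩
  invFun t := ⟨⟨U.1.subtype ∘ t.1, t.2.map' _ (ker_subtype _)⟩, by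
    refine eq_of_le_of_finrank_eq (span_le.mpr ?_) ?_
    · rintro _ ⟨i, rfl⟩
      exact (t.1 i).2
    · rw [finrank_span_eq_card (t.2.map' _ (ker_subtype _)), Fintype.card_fin, U.2]⟩
  left_inv _ := rfl
  right_inv _ := rfl

theorem card_submodule_finrank_mul_prod {k : ℕ} (hk : k ≤ finrank K V) :
    Nat.card {U : Submodule K V // finrank K U = k} *
        ∏ i : Fin k, (Fintype.card K ^ k - Fintype.card K ^ (i : ℕ)) =
      ∏ i : Fin k, (Fintype.card K ^ finrank K V - Fintype.card K ^ (i : ℕ)) := by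
  have : Fintype {U : Submodule K V // finrank K U = k} := Fintype.ofFinite _
  let spanOf (s : {s : Fin k → V // LinearIndependent K s}) :
      {U : Submodule K V // finrank K U = k} :=
    ⟨span K (Set.range s.1), by rw [finrank_span_eq_card s.2, Fintype.card_fin]⟩
  have hfiber (U : {U : Submodule K V // finrank K U = k}) :
      Nat.card {s // spanOf s = U} =
        ∏ i : Fin k, (Fintype.card K ^ k - Fintype.card K ^ (i : ℕ)) := by
    have h := card_linearIndependent (K := K) (V := U.1) (k := k) U.2.ge
    rw [U.2] at h
    rw [← h, ← Nat.card_congr (linearIndependentSpanEquiv U)]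
    exact Nat.card_congr (Equiv.subtypeEquivRight fun s => Subtype.ext_iff)
  rw [← card_linearIndependent hk, ← Nat.card_congr (Equiv.sigmaFiberEquiv spanOf),
    Nat.card_sigma, Finset.sum_congr rfl fun U _ => hfiber U, Finset.sum_const,
    Finset.card_univ, smul_eq_mul, Nat.card_eq_fintype_card]

theorem cast_pow_sub_pow {q i m : ℕ} (hq : 1 ≤ q) (hi : i ≤ m) :
    ((q ^ m - q ^ i : ℕ) : ℚ) = (q : ℚ) ^ i * ((q : ℚ) ^ (m - i) - 1) := by
  rw [Nat.cast_sub (Nat.pow_le_pow_right hq hi), mul_sub, mul_one, ← pow_add,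
    Nat.add_sub_cancel' hi]
  push_cast
  ring

theorem card_submodule_finrank_eq_prod {k : ℕ} (hk : k ≤ finrank K V) :
    (Nat.card {U : Submodule K V // finrank K U = k} : ℚ) =
      ∏ i ∈ Finset.range k, ((Fintype.card K : ℚ) ^ (finrank K V - i) - 1) /
        ((Fintype.card K : ℚ) ^ (k - i) - 1) := by
  set q := Fintype.card K
  have hq : 1 < q := Fintype.one_lt_card
  have hcast {m : ℕ} (hm : k ≤ m) :
      ((∏ i : Fin k, (q ^ m - q ^ (i : ℕ)) : ℕ) : ℚ) =
        (∏ i ∈ Finset.range k, (q : ℚ) ^ i) * ∏ i ∈ Finset.range k, ((q : ℚ) ^ (m - i) - 1) := by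
    rw [Nat.cast_prod, Fin.prod_univ_eq_prod_range (fun i => ((q ^ m - q ^ i : ℕ) : ℚ)),
      ← Finset.prod_mul_distrib]
    exact Finset.prod_congr rfl fun i hi =>
      cast_pow_sub_pow hq.le (by rw [Finset.mem_range] at hi; omega)
  have h := congrArg (Nat.cast (R := ℚ)) (card_submodule_finrank_mul_prod hk)
  rw [Nat.cast_mul, hcast le_rfl, hcast hk] at h
  have hpow : ∏ i ∈ Finset.range k, (q : ℚ) ^ i ≠ 0 :=
    Finset.prod_ne_zero_iff.mpr fun i _ => pow_ne_zero _ (by positivity)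
  have hden : ∏ i ∈ Finset.range k, ((q : ℚ) ^ (k - i) - 1) ≠ 0 := by
    refine Finset.prod_ne_zero_iff.mpr fun i hi => sub_ne_zero.mpr (one_lt_pow₀ ?_ ?_).ne'
    · exact_mod_cast hq
    · rw [Finset.mem_range] at hi; omega
  rw [Finset.prod_div_distrib, eq_div_iff hden]
  exact mul_left_cancel₀ hpow (by linear_combination h)

end SubmoduleCount

section Cosets

theorem injective_sigma_quotient_preimage {R M : Type*} [Ring R] [AddCommGroup M] [Module R M] :
    Function.Injective fun p : Σ U : Submodule R M, M ⧸ U =>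
      (Submodule.Quotient.mk ⁻¹' {p.2} : Set M) := by
  rintro ⟨U, c⟩ ⟨U', c'⟩ h
  obtain ⟨a, rfl⟩ := Submodule.Quotient.mk_surjective U c
  obtain rfl : Submodule.Quotient.mk a = c' := Set.ext_iff.mp h a |>.mp rfl
  have hsub (x : M) : x - a ∈ U ↔ x - a ∈ U' := by
    simpa [Submodule.Quotient.eq] using Set.ext_iff.mp h x
  obtain rfl : U = U' := by
    ext u
    simpa using hsub (u + a)
  rfl

variable (K V : Type*) [Field K] [AddCommGroup V] [Module K V]

def cosetsOfFinrank (k : ℕ) : Set (Set V) :=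
  {A | ∃ U : Submodule K V, finrank K U = k ∧ ∃ a, A = {x | x - a ∈ U}}

theorem card_cosetsOfFinrank [Fintype K] [Finite V] (k : ℕ) :
    Nat.card (cosetsOfFinrank K V k) =
      Nat.card {U : Submodule K V // finrank K U = k} * Fintype.card K ^ (finrank K V - k) := by
  have : Fintype {U : Submodule K V // finrank K U = k} := Fintype.ofFinite _
  have (U : Submodule K V) : Finite (V ⧸ U) := Finite.of_surjective _ U.mkQ_surjective
  let coset (p : Σ U : {U : Submodule K V // finrank K U = k}, V ⧸ U.1) : Set V :=
    Submodule.Quotient.mk ⁻¹' {p.2}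
  have hforget : Function.Injective (Sigma.map Subtype.val fun U => (id : V ⧸ U.1 → V ⧸ U.1) :
      (Σ U : {U : Submodule K V // finrank K U = k}, V ⧸ U.1) → Σ U : Submodule K V, V ⧸ U) :=
    Subtype.val_injective.sigma_map fun _ => Function.injective_id
  have hcoset : Function.Injective coset := fun p p' h =>
    hforget (injective_sigma_quotient_preimage (a₁ := ⟨p.1.1, p.2⟩) (a₂ := ⟨p'.1.1, p'.2⟩) h)
  have hrange : cosetsOfFinrank K V k = Set.range coset := by
    ext A
    constructor
    · rintro ⟨U, hU, a, rfl⟩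
      exact ⟨⟨⟨U, hU⟩, Submodule.Quotient.mk a⟩, by ext; simp [coset, Submodule.Quotient.eq]⟩
    · rintro ⟨⟨U, c⟩, rfl⟩
      obtain ⟨a, rfl⟩ := Submodule.Quotient.mk_surjective U.1 c
      exact ⟨U.1, U.2, a, by ext; simp [coset, Submodule.Quotient.eq]⟩
  have hquot (U : {U : Submodule K V // finrank K U = k}) :
      Nat.card (V ⧸ U.1) = Fintype.card K ^ (finrank K V - k) := by
    rw [natCard_eq_pow_finrank (K := K), finrank_quotient, U.2, Nat.card_eq_fintype_card]
  rw [hrange, Nat.card_range_of_injective hcoset, Nat.card_sigma,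
    Finset.sum_congr rfl fun U _ => hquot U, Finset.sum_const, Finset.card_univ, smul_eq_mul,
    Nat.card_eq_fintype_card]

end Cosets

theorem exists_basis_span_zero_eq {L V : Type*} [Field L] [AddCommGroup V] [Module L V]
    {T : Submodule L V} (hT : finrank L T = 1) (hV : finrank L V = 2) :
    ∃ b : Basis (Fin 2) L V, T = span L {b 0} := by
  obtain ⟨⟨v, hvT⟩, hv0, -⟩ := finrank_eq_one_iff'.mp hT
  have hv0 : v ≠ 0 := fun h => hv0 (Subtype.ext h)
  obtain ⟨w, hvw⟩ := exists_linearIndependent_pair_of_one_lt_rank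
    (one_lt_rank_of_one_lt_finrank (R := L) (by omega)) hv0
  let b := basisOfLinearIndependentOfCardEqFinrank hvw (by simp [hV])
  have hb0 : b 0 = v := by simp [b]
  have : FiniteDimensional L T := Module.finite_of_finrank_pos (by omega)
  refine ⟨b, (eq_of_le_of_finrank_eq ?_ ?_).symm⟩
  · rwa [span_le, Set.singleton_subset_iff, hb0]
  · rw [hb0, finrank_span_singleton hv0, hT]
section Chart

variable {L V : Type*} [Field L] [AddCommGroup V] [Module L V] (b : Basis (Fin 2) L V)

def chartPoint (x : L) : Submodule L V := span L {b 1 + x • b 0}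

variable {b}

theorem coord_smul_add_coord_smul (z : V) : b.coord 0 z • b 0 + b.coord 1 z • b 1 = z := by
  rw [Basis.coord_apply, Basis.coord_apply, ← Fin.sum_univ_two (fun i => b.repr z i • b i),
    b.sum_repr]

theorem mem_span_basis_zero_iff {z : V} : z ∈ span L {b 0} ↔ b.coord 1 z = 0 := by
  refine ⟨fun h => ?_, fun h => ?_⟩
  · obtain ⟨e, rfl⟩ := mem_span_singleton.mp h
    simp
  · rw [← coord_smul_add_coord_smul (b := b) z, h, zero_smul, add_zero]
    exact mem_span_singleton.mpr ⟨_, rfl⟩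

theorem span_singleton_eq_chartPoint {z : V} (hz : b.coord 1 z ≠ 0) :
    span L {z} = chartPoint b (b.coord 0 z / b.coord 1 z) := by
  have : z = b.coord 1 z • (b 1 + (b.coord 0 z / b.coord 1 z) • b 0) := by
    rw [smul_add, smul_smul, mul_div_cancel₀ _ hz, add_comm, coord_smul_add_coord_smul]
  rw [chartPoint]
  conv_lhs => rw [this]
  exact span_singleton_smul_eq (isUnit_iff_ne_zero.mpr hz) _

theorem coord_zero_eq_mul_of_mem_chartPoint {x : L} {z : V} (hz : z ∈ chartPoint b x) :
    b.coord 0 z = x * b.coord 1 z := by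
  obtain ⟨e, rfl⟩ := mem_span_singleton.mp hz
  simp [mul_comm]

theorem chartPoint_ne (x : L) : chartPoint b x ≠ span L {b 0} := by
  intro h
  have : b 1 + x • b 0 ∈ span L {b 0} := h ▸ mem_span_singleton_self _
  simp [mem_span_basis_zero_iff] at this

theorem chartPoint_injective : Function.Injective (chartPoint b) := by
  intro x y h
  have : b 1 + x • b 0 ∈ chartPoint b y := h ▸ mem_span_singleton_self _
  simpa using coord_zero_eq_mul_of_mem_chartPoint this

theorem preimage_chartPoint_insert_image (A : Set L) :
    chartPoint b ⁻¹' insert (span L {b 0}) (chartPoint b '' A) = A := by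
  ext x
  simp [chartPoint_ne, chartPoint_injective.eq_iff]

end Chart

noncomputable section Splash

variable {K L V : Type*} [Field K] [Field L] [Algebra K L] [AddCommGroup V] [Module L V]
  [Module K V] [IsScalarTower K L V] {b : Basis (Fin 2) L V}

variable (K b) in
def centreEmbedding : L →ₗ[K] V := (LinearMap.toSpanSingleton L V (b 0)).restrictScalars K

variable (b) in
def splashSpace (U : Submodule K L) (g : V) : Submodule K V :=
  U.map (centreEmbedding K b) ⊔ K ∙ g

theorem centreEmbedding_apply (u : L) : centreEmbedding K b u = u • b 0 := rfl

theorem centreEmbedding_injective : Function.Injective (centreEmbedding K b) :=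
  smul_left_injective L (b.ne_zero 0)

theorem range_centreEmbedding :
    LinearMap.range (centreEmbedding K b) = (span L {b 0}).restrictScalars K := by
  rw [centreEmbedding, LinearMap.range_restrictScalars, LinearMap.range_toSpanSingleton]

theorem finrank_map_centreEmbedding (U : Submodule K L) :
    finrank K (U.map (centreEmbedding K b)) = finrank K U :=
  (equivMapOfInjective _ centreEmbedding_injective U).finrank_eq.symm

theorem mem_splashSpace {U : Submodule K L} {g z : V} :
    z ∈ splashSpace b U g ↔ ∃ u ∈ U, ∃ t : K, u • b 0 + t • g = z := by
  simp [splashSpace, mem_sup, mem_span_singleton, centreEmbedding_apply]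

theorem coord_one_smul_add_smul (u : L) (t : K) (g : V) :
    b.coord 1 (u • b 0 + t • g) = t • b.coord 1 g := by
  rw [map_add, map_smul, LinearMap.map_smul_of_tower]
  simp

theorem coord_zero_smul_add_smul (u : L) (t : K) (g : V) :
    b.coord 0 (u • b 0 + t • g) = u + t • b.coord 0 g := by
  rw [map_add, map_smul, LinearMap.map_smul_of_tower]
  simp

theorem splashSpace_inf {U : Submodule K L} {g : V} (hg : b.coord 1 g ≠ 0) :
    splashSpace b U g ⊓ (span L {b 0}).restrictScalars K = U.map (centreEmbedding K b) := by
  refine le_antisymm (fun z hz => ?_) (le_inf le_sup_left ?_)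
  · obtain ⟨⟨u, hu, t, rfl⟩, hzT⟩ := And.imp_left mem_splashSpace.mp (mem_inf.mp hz)
    rw [restrictScalars_mem, mem_span_basis_zero_iff, coord_one_smul_add_smul,
      smul_eq_zero] at hzT
    obtain rfl : t = 0 := hzT.resolve_right hg
    rw [zero_smul, add_zero]
    exact mem_map_of_mem hu
  · rw [← range_centreEmbedding]
    exact LinearMap.map_le_range

theorem finrank_splashSpace [FiniteDimensional K L] {U : Submodule K L} {g : V}
    (hg : b.coord 1 g ≠ 0) : finrank K (splashSpace b U g) = finrank K U + 1 := by
  have hdisj : U.map (centreEmbedding K b) ⊓ (K ∙ g) = ⊥ := by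
    refine eq_bot_iff.mpr fun z hz => ?_
    obtain ⟨hzU, t, rfl⟩ := And.imp_right mem_span_singleton.mp (mem_inf.mp hz)
    have : b.coord 1 (t • g) = 0 := by
      rw [← mem_span_basis_zero_iff, ← restrictScalars_mem K, ← range_centreEmbedding]
      exact LinearMap.map_le_range hzU
    rw [LinearMap.map_smul_of_tower, smul_eq_zero] at this
    simp [this.resolve_right hg]
  have hg0 : g ≠ 0 := fun h => hg (by simp [h])
  have := finrank_sup_add_finrank_inf_eq (U.map (centreEmbedding K b)) (K ∙ g)
  rwa [hdisj, finrank_bot, add_zero, finrank_map_centreEmbedding, finrank_span_singleton hg0]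
    at this

theorem bset_splashSpace {U : Submodule K L} {g : V} (hU : U ≠ ⊥) (hg : b.coord 1 g ≠ 0) :
    BSet L (splashSpace b U g : Set V) =
      insert (span L {b 0}) (chartPoint b '' {x | b.coord 1 g * x - b.coord 0 g ∈ U}) := by
  ext P
  constructor
  · rintro ⟨_, hz, hz0, rfl⟩
    obtain ⟨u, hu, t, rfl⟩ := mem_splashSpace.mp hz
    by_cases ht : t = 0
    · subst ht
      have hu0 : u ≠ 0 := by rintro rfl; simp at hz0
      left
      simpa using span_singleton_smul_eq hu0.isUnit (b 0)
    · right
      have hcz : b.coord 1 (u • b 0 + t • g) ≠ 0 := by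
        rw [coord_one_smul_add_smul]
        exact smul_ne_zero ht hg
      refine ⟨_, ?_, (span_singleton_eq_chartPoint hcz).symm⟩
      have key : b.coord 1 g * (b.coord 0 (u • b 0 + t • g) / b.coord 1 (u • b 0 + t • g)) -
          b.coord 0 g = t⁻¹ • u := by
        rw [coord_zero_smul_add_smul, coord_one_smul_add_smul]
        have : algebraMap K L t ≠ 0 := by simpa using ht
        simp only [Algebra.smul_def, map_inv₀]
        field_simp
        ring
      simpa only [Set.mem_ofPred_eq, key] using U.smul_mem t⁻¹ hu
  · rintro (rfl | ⟨x, hx, rfl⟩)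
    · obtain ⟨u, hu, hu0⟩ := exists_mem_ne_zero_of_ne_bot hU
      exact ⟨u • b 0, mem_splashSpace.mpr ⟨u, hu, 0, by simp⟩, smul_ne_zero hu0 (b.ne_zero 0),
        (span_singleton_smul_eq hu0.isUnit _).symm⟩
    · set u := b.coord 1 g * x - b.coord 0 g
      have hcz : b.coord 1 (u • b 0 + (1 : K) • g) ≠ 0 := by
        rwa [coord_one_smul_add_smul, one_smul]
      refine ⟨u • b 0 + (1 : K) • g, mem_splashSpace.mpr ⟨u, hx, 1, rfl⟩,
        fun h => hcz (by rw [h, map_zero]), ?_⟩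
      rw [span_singleton_eq_chartPoint hcz, coord_zero_smul_add_smul, coord_one_smul_add_smul,
        one_smul, one_smul, sub_add_cancel, mul_div_cancel_left₀ x hg]

theorem exists_eq_splashSpace [FiniteDimensional K L] {W : Submodule K V}
    (hW : finrank K W = finrank K ↥(W ⊓ (span L {b 0}).restrictScalars K) + 1) :
    ∃ U : Submodule K L, ∃ g : V, b.coord 1 g ≠ 0 ∧
      U.map (centreEmbedding K b) = W ⊓ (span L {b 0}).restrictScalars K ∧
      W = splashSpace b U g := by
  have : FiniteDimensional K W := Module.finite_of_finrank_pos (by omega)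
  set M := W ⊓ (span L {b 0}).restrictScalars K
  have hM : (W.comap (centreEmbedding K b)).map (centreEmbedding K b) = M := by
    rw [map_comap_eq, range_centreEmbedding, inf_comm]
  have hMW : M < W := lt_of_le_of_ne inf_le_left fun h => by rw [h] at hW; omega
  obtain ⟨g, hgW, hgM⟩ := SetLike.exists_of_lt hMW
  have hg : b.coord 1 g ≠ 0 := fun h => hgM (mem_inf.mpr ⟨hgW, mem_span_basis_zero_iff.mpr h⟩)
  refine ⟨W.comap (centreEmbedding K b), g, hg, hM, (eq_of_le_of_finrank_eq ?_ ?_).symm⟩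
  · exact sup_le (hM ▸ inf_le_left) (span_le.mpr (Set.singleton_subset_iff.mpr hgW))
  · rw [finrank_splashSpace hg, ← finrank_map_centreEmbedding (b := b), hM, hW]

end Splash

section Count

variable {K L V : Type*} [Field K] [Field L] [Algebra K L] [AddCommGroup V] [Module L V]
  [Module K V] [IsScalarTower K L V]

theorem setOf_mul_sub_mem_mem_cosetsOfFinrank {U : Submodule K L} {k : ℕ}
    (hU : finrank K U = k) {γ : L} (hγ : γ ≠ 0) (δ : L) :
    {x | γ * x - δ ∈ U} ∈ cosetsOfFinrank K L k := by
  let e : L ≃ₗ[K] L := DistribMulAction.toLinearEquiv K L (Units.mk0 γ hγ)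
  refine ⟨U.comap (e : L →ₗ[K] L), ?_, δ / γ, ?_⟩
  · rw [comap_equiv_eq_map_symm, LinearEquiv.finrank_map_eq, hU]
  · ext x
    simp [e, mul_sub, mul_div_cancel₀ _ hγ]

theorem setOf_splash_eq_image [FiniteDimensional K L] (b : Basis (Fin 2) L V) {r : ℕ}
    (hr : 2 ≤ r) :
    {S | ∃ W : Submodule K V, finrank K W = r ∧
        finrank K ↥(W ⊓ (span L {b 0}).restrictScalars K) = r - 1 ∧
        BSet L (W : Set V) = S} =
      (fun A => insert (span L {b 0}) (chartPoint b '' A)) '' cosetsOfFinrank K L (r - 1) := by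
  have ne_bot {U : Submodule K L} (hU : finrank K U = r - 1) : U ≠ ⊥ := by
    rintro rfl
    rw [finrank_bot] at hU
    omega
  ext S
  constructor
  · rintro ⟨W, hWr, hWT, rfl⟩
    obtain ⟨U, g, hg, hUW, rfl⟩ := exists_eq_splashSpace (b := b) (W := W) (by omega)
    have hU : finrank K U = r - 1 := by rw [← finrank_map_centreEmbedding (b := b), hUW, hWT]
    exact ⟨_, setOf_mul_sub_mem_mem_cosetsOfFinrank hU hg _,
      (bset_splashSpace (ne_bot hU) hg).symm⟩
  · rintro ⟨_, ⟨U, hU, a, rfl⟩, rfl⟩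
    have hg : b.coord 1 (b 1 + a • b 0) = 1 := by simp
    have hg' : b.coord 0 (b 1 + a • b 0) = a := by simp
    refine ⟨splashSpace b U (b 1 + a • b 0), ?_, ?_, ?_⟩
    · rw [finrank_splashSpace (hg ▸ one_ne_zero), hU]
      omega
    · rw [splashSpace_inf (hg ▸ one_ne_zero), finrank_map_centreEmbedding, hU]
    · simp only [bset_splashSpace (ne_bot hU) (hg ▸ one_ne_zero), hg, hg', one_mul]

theorem card_splashes_eq [FiniteDimensional K L] (b : Basis (Fin 2) L V) {r : ℕ} (hr : 2 ≤ r) :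
    Nat.card {S : Set (Submodule L V) // ∃ W : Submodule K V, finrank K W = r ∧
        finrank K ↥(W ⊓ (span L {b 0}).restrictScalars K) = r - 1 ∧
        BSet L (W : Set V) = S} =
      Nat.card (cosetsOfFinrank K L (r - 1)) := by
  rw [← Set.coe_ofPred, setOf_splash_eq_image b hr, Nat.card_image_of_injective]
  intro A A' h
  simpa only [preimage_chartPoint_insert_image] using congrArg (chartPoint b ⁻¹' ·) h

end Count

/-- the number of distinct tangent splashes of rank `r` on `PG(1,q^n)`
with a fixed centre `T`. -/
theorem count_tangent_splashes_with_centre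
    (K L : Type*) [Field K] [Field L] [Algebra K L] [Fintype K] [Fintype L]
    (q r n : ℕ) (hq : Fintype.card K = q)
    (hr : 3 ≤ r) (hrn : r ≤ n) (hrank : Module.finrank K L = n)
    (T : Submodule L (Fin 2 → L)) (hT : Module.finrank L T = 1) :
    (Nat.card {S : Set (Submodule L (Fin 2 → L)) //
        ∃ W : Submodule K (Fin 2 → L), Module.finrank K W = r ∧
          Module.finrank K ↥(W ⊓ T.restrictScalars K) = r - 1 ∧
          BSet L (W : Set (Fin 2 → L)) = S} : ℚ) =
      (q : ℚ) ^ (n + 1 - r) *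
        ∏ i ∈ Finset.range (r - 1),
          ((q : ℚ) ^ (n - i) - 1) / ((q : ℚ) ^ (r - 1 - i) - 1) := by
  obtain ⟨b, rfl⟩ := exists_basis_span_zero_eq hT (finrank_fin_fun L)
  rw [card_splashes_eq b (by omega), card_cosetsOfFinrank, Nat.cast_mul,
    card_submodule_finrank_eq_prod (by omega), hq, hrank, mul_comm, Nat.cast_pow,
    show n - (r - 1) = n + 1 - r by omega]
end

section
/- Let 3 ≤ r ≤ n. Let π₀ = B(V) be a q-subgeometry of PG(r-1,q^n) and l_∞ = PG(U) a line tangent to π₀ with centre T, not contained in the extension of any hyperplane of π₀, with S(π₀,l_∞) = {T} ∪ A, T ∉ A. Suppose u, v ∈ U and ρ₁, …, ρ_{r-2} ∈ L are such that 1, ρ₁, …, ρ_{r-2} are linearly independent over K, T = L·u, P := L·v ∈ A, and A = { L·(x·u + (∑ y_i ρ_i)·u + v) : x, y_i ∈ K }. Let H₀ = B(H) be a hyperplane of π₀ (H a K-subspace of V with dim_K H = r-1) such that P is contained in the L-span of H. Then there exist vectors s₀, s₁, …, s_{r-2} ∈ L^r such that: (i) H₀ = B(span_K{s₀, …, s_{r-2}});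 (ii) v = s₀ + ∑_{i=1}^{r-2} ρ_i s_i; and (iii) π₀ = B(span_K{u, s₀, …, s_{r-2}}). -/
open Submodule Module

lemma BSet_smul_image {L W : Type*} [Field L] [AddCommGroup W] [Module L W]
    {δ : L} (hδ : δ ≠ 0) (X : Set W) :
    BSet L ((δ • ·) '' X) = BSet L X := by
  have key : ∀ x : W, Submodule.span L {δ • x} = Submodule.span L {x} := fun x =>
    Submodule.span_singleton_smul_eq (IsUnit.mk0 δ hδ) x
  ext Q
  constructor
  · rintro ⟨y, ⟨x, hx, rfl⟩, hne, rfl⟩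
    exact ⟨x, hx, fun h => hne (by simp [h]), by simpa using key x⟩
  · rintro ⟨x, hx, hne, rfl⟩
    exact ⟨δ • x, ⟨x, hx, rfl⟩, smul_ne_zero hδ hne, (key x).symm⟩

lemma hyperplane_ext {K L : Type*} [Field K] [Field L] [Algebra K L] [Fintype K] [Fintype L]
    {r : ℕ} (hr : 1 ≤ r)
    {V : Submodule K (Fin r → L)} (hVrank : Module.finrank K V = r)
    (hVspan : Submodule.span L (V : Set (Fin r → L)) = ⊤)
    {H' : Submodule K (Fin r → L)} (hH'V : H' ≤ V) (hH'rank : Module.finrank K H' = r - 1) :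
    ∃ G : (Fin r → L) →ₗ[L] L,
      Submodule.span L (H' : Set (Fin r → L)) = LinearMap.ker G ∧
      ∀ z ∈ V, ∃ k : K, G z = algebraMap K L k := by
  classical
  haveI : FiniteDimensional K (Fin r → L) := Module.Finite.of_finite
  set E := Submodule.span L (H' : Set (Fin r → L)) with hE
  have htop : Module.finrank L (⊤ : Submodule L (Fin r → L)) = r := by
    rw [finrank_top, Module.finrank_fintype_fun_eq_card, Fintype.card_fin]
  have hEub : Module.finrank L E ≤ r - 1 := by
    have bH := (Module.finBasis K H').reindex (finCongr hH'rank)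
    have hsp : Submodule.span K (Set.range (fun j => (bH j : Fin r → L))) = H' := by
      have h0 : (fun j => (bH j : Fin r → L)) = H'.subtype ∘ bH := rfl
      rw [h0, Set.range_comp, ← Submodule.map_span, Basis.span_eq, Submodule.map_subtype_top]
    have hE' : E = Submodule.span L (Set.range (fun j => (bH j : Fin r → L))) := by
      have h1 := Submodule.span_span_of_tower (R := K) (S := L)
        (s := Set.range (fun j => (bH j : Fin r → L))) (M := Fin r → L)
      rw [hsp] at h1
      rw [hE, ← h1]
    rw [hE']
    haveI := Set.fintypeRange (fun j => (bH j : Fin r → L))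
    refine le_trans (finrank_span_le_card _) ?_
    rw [Set.toFinset_range]
    exact le_trans Finset.card_image_le (by simp)
  have hlt : H' < V := lt_of_le_of_ne hH'V (by
    rintro rfl; rw [hH'rank] at hVrank; omega)
  obtain ⟨w, hwV, hwH⟩ := SetLike.exists_of_lt hlt
  have hw0 : w ≠ 0 := fun h => hwH (h ▸ H'.zero_mem)
  have hinf : H' ⊓ Submodule.span K {w} = ⊥ := by
    rw [eq_bot_iff]
    rintro x hx
    rw [Submodule.mem_inf] at hx
    obtain ⟨hx1, hx2⟩ := hx
    rw [Submodule.mem_span_singleton] at hx2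
    obtain ⟨k, rfl⟩ := hx2
    rcases eq_or_ne k 0 with rfl | hk
    · simp
    · exact absurd (by simpa [smul_smul, hk] using H'.smul_mem k⁻¹ hx1) hwH
  have hsupV : H' ⊔ Submodule.span K {w} = V := by
    refine Submodule.eq_of_le_of_finrank_le
      (sup_le hH'V (by rwa [Submodule.span_singleton_le_iff_mem])) ?_
    have h2 := Submodule.finrank_sup_add_finrank_inf_eq H' (Submodule.span K {w})
    rw [hinf, hH'rank, finrank_span_singleton hw0, finrank_bot] at h2
    rw [hVrank]
    omega
  have hsupTop : E ⊔ Submodule.span L {w} = ⊤ := by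
    have h1 : Submodule.span K ((H' : Set (Fin r → L)) ∪ {w}) = V := by
      rw [Submodule.span_union, Submodule.span_eq, hsupV]
    have h3 := Submodule.span_span_of_tower (R := K) (S := L)
      (s := (H' : Set (Fin r → L)) ∪ {w}) (M := Fin r → L)
    rw [h1] at h3
    rw [hE, ← Submodule.span_union, ← h3, hVspan]
  have hwE : w ∉ E := by
    intro hw
    have h5 : E ⊔ Submodule.span L {w} = E := by
      rw [sup_eq_left, Submodule.span_singleton_le_iff_mem]; exact hw
    rw [hsupTop] at h5
    have h4 : Module.finrank L (⊤ : Submodule L (Fin r → L)) ≤ r - 1 := h5 ▸ hEub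
    omega
  obtain ⟨f, hf0, hfE⟩ := Submodule.exists_dual_map_eq_bot_of_notMem hwE inferInstance
  set G : (Fin r → L) →ₗ[L] L := (f w)⁻¹ • f with hG
  have hGw : G w = 1 := by
    rw [hG]; simp [inv_mul_cancel₀ hf0]
  have hGE : ∀ z ∈ E, G z = 0 := by
    intro z hz
    have h6 : f z = 0 := by
      have h7 : f z ∈ E.map f := ⟨z, hz, rfl⟩
      rwa [hfE, Submodule.mem_bot] at h7
    rw [hG]; simp [h6]
  have hEker : E = LinearMap.ker G := by
    refine Submodule.eq_of_le_of_finrank_le (fun z hz => LinearMap.mem_ker.2 (hGE z hz)) ?_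
    have hrange : LinearMap.range G = ⊤ := by
      rw [eq_top_iff]
      intro c _
      exact ⟨c • w, by rw [map_smul, hGw, smul_eq_mul, mul_one]⟩
    have h6 := LinearMap.finrank_range_add_finrank_ker G
    rw [hrange, finrank_top, Module.finrank_fintype_fun_eq_card, Fintype.card_fin,
      Module.finrank_self] at h6
    have h8 := Submodule.finrank_sup_add_finrank_inf_eq E (Submodule.span L {w})
    rw [hsupTop, htop, finrank_span_singleton hw0] at h8
    omega
  refine ⟨G, hEker, ?_⟩
  intro z hz
  rw [← hsupV] at hz
  obtain ⟨z₁, hz₁, z₂, hz₂, rfl⟩ := Submodule.mem_sup.1 hz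
  rw [Submodule.mem_span_singleton] at hz₂
  obtain ⟨k, rfl⟩ := hz₂
  refine ⟨k, ?_⟩
  rw [map_add, hGE z₁ (Submodule.subset_span hz₁), LinearMap.map_smul_of_tower, hGw, zero_add,
    Algebra.algebraMap_eq_smul_one]


set_option maxHeartbeats 2000000 in
/-- existence of a tuple `s = (s₀, …, s_{r-2})` of vectors such that
(i) the hyperplane `H₀` through `P` is `B(⟨s₀, …, s_{r-2}⟩_K)`,
(ii) `v = s₀ + ∑ ρᵢ sᵢ`, and (iii) `π₀ = B(⟨u, s₀, …, s_{r-2}⟩_K)`. -/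
theorem tangent_splash_hyperplane_tuple
    (K L : Type*) [Field K] [Field L] [Algebra K L] [Fintype K] [Fintype L]
    (r n : ℕ) (hr : 3 ≤ r) (hrn : r ≤ n) (hrank : Module.finrank K L = n)
    (V : Submodule K (Fin r → L))
    (hVrank : Module.finrank K V = r)
    (hVspan : Submodule.span L (V : Set (Fin r → L)) = ⊤)
    (U : Submodule L (Fin r → L)) (hU : Module.finrank L U = 2)
    (T : Submodule L (Fin r → L))
    (htangent : {P | P ∈ BSet L (V : Set (Fin r → L)) ∧ P ≤ U} = {T})
    (hext : ∀ H : Submodule K (Fin r → L), H ≤ V → Module.finrank K H = r - 1 →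
      ¬ U ≤ Submodule.span L (H : Set (Fin r → L)))
    (A : Set (Submodule L (Fin r → L))) (hTA : T ∉ A)
    (hsplash : Splash K L V U r = insert T A)
    (P : Submodule L (Fin r → L)) (hP : P ∈ A)
    (u v : Fin r → L) (hu : u ∈ U) (hv : v ∈ U)
    (ρ : Fin (r - 2) → L)
    (hρ : LinearIndependent K (Fin.cons (1 : L) ρ : Fin (r - 2 + 1) → L))
    (hTu : T = Submodule.span L {u}) (hPv : P = Submodule.span L {v})
    (hApar : A = {Q | ∃ (x : K) (y : Fin (r - 2) → K),
      Q = Submodule.span L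
        {(algebraMap K L x + ∑ i, algebraMap K L (y i) * ρ i) • u + v}})
    (H : Submodule K (Fin r → L)) (hHV : H ≤ V)
    (hHrank : Module.finrank K H = r - 1)
    (hPH : P ≤ Submodule.span L (H : Set (Fin r → L))) :
    ∃ s : Fin (r - 2 + 1) → (Fin r → L),
      BSet L (H : Set (Fin r → L)) =
        BSet L ((Submodule.span K (Set.range s) :
          Submodule K (Fin r → L)) : Set (Fin r → L)) ∧
      v = s 0 + ∑ i : Fin (r - 2), ρ i • s i.succ ∧
      BSet L (V : Set (Fin r → L)) =
        BSet L ((Submodule.span K (insert u (Set.range s)) :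
          Submodule K (Fin r → L)) : Set (Fin r → L)) := by
    classical
  haveI : FiniteDimensional K (Fin r → L) := Module.Finite.of_finite
  -- ## basics
  have hTS : T ∈ Splash K L V U r := by rw [hsplash]; exact Set.mem_insert _ _
  have hPS : P ∈ Splash K L V U r := by rw [hsplash]; exact Set.mem_insert_of_mem _ hP
  have hu0 : u ≠ 0 := by
    rintro rfl
    have h1 := hTS.1
    rw [hTu, Submodule.span_zero_singleton, finrank_bot] at h1
    exact absurd h1 (by norm_num)
  have hv0 : v ≠ 0 := by
    rintro rfl
    have h1 := hPS.1
    rw [hPv, Submodule.span_zero_singleton, finrank_bot] at h1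
    exact absurd h1 (by norm_num)
  have hTP : T ≠ P := fun h => hTA (h ▸ hP)
  have huv : ∀ a b : L, a • u + b • v = 0 → a = 0 ∧ b = 0 := by
    intro a b hab
    have hb : b = 0 := by
      by_contra hb
      have hvu : v = (-(b⁻¹ * a)) • u := by
        have h1 : b • v = -(a • u) := by
          apply eq_neg_of_add_eq_zero_left
          rw [add_comm]; exact hab
        have h2 : v = b⁻¹ • (b • v) := by rw [smul_smul, inv_mul_cancel₀ hb, one_smul]
        rw [h2, h1, smul_neg, smul_smul]
        rw [neg_smul]
      have hc0 : (-(b⁻¹ * a)) ≠ 0 := by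
        intro h
        rw [h, zero_smul] at hvu
        exact hv0 hvu
      have : P = T := by
        rw [hPv, hTu, hvu, Submodule.span_singleton_smul_eq (IsUnit.mk0 _ hc0)]
      exact hTP this.symm
    refine ⟨?_, hb⟩
    rw [hb, zero_smul, add_zero] at hab
    rcases smul_eq_zero.1 hab with h | h
    · exact h
    · exact absurd h hu0
  have hne0 : ∀ α : L, α • u + v ≠ 0 := by
    intro α h
    have h1 := (huv α 1 (by rw [one_smul]; exact h)).2
    exact one_ne_zero h1
  have hinj : ∀ α β : L, Submodule.span L {α • u + v} = Submodule.span L {β • u + v} → α = β := by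
    intro α β hαβ
    have h1 : α • u + v ∈ Submodule.span L {β • u + v} := by
      rw [← hαβ]; exact Submodule.mem_span_singleton_self _
    obtain ⟨e, he⟩ := Submodule.mem_span_singleton.1 h1
    have h2 : (e * β - α) • u + (e - 1) • v = 0 := by
      have h5 : (e * β - α) • u + (e - 1) • v = e • (β • u + v) - (α • u + v) := by
        rw [smul_add, smul_smul, sub_smul, sub_smul, one_smul]; abel
      rw [h5, he, sub_self]
    obtain ⟨h3, h4⟩ := huv _ _ h2
    have he1 : e = 1 := by rwa [sub_eq_zero] at h4
    rw [he1, one_mul] at h3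
    exact (sub_eq_zero.1 h3).symm
  have hQneT : ∀ α : L, Submodule.span L {α • u + v} ≠ T := by
    intro α hQT
    have h1 : u ∈ Submodule.span L {α • u + v} := by
      rw [hQT, hTu]; exact Submodule.mem_span_singleton_self _
    obtain ⟨e, he⟩ := Submodule.mem_span_singleton.1 h1
    have h2 : (e * α - 1) • u + e • v = 0 := by
      have h5 : (e * α - 1) • u + e • v = e • (α • u + v) - u := by
        rw [smul_add, smul_smul, sub_smul, one_smul]; abel
      rw [h5, he, sub_self]
    obtain ⟨h3, h4⟩ := huv _ _ h2
    rw [h4, zero_mul, zero_sub] at h3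
    exact one_ne_zero (neg_eq_zero.1 h3)
  have hUuv : U = Submodule.span L {u, v} := by
    have hind : LinearIndependent L ![u, v] := LinearIndependent.pair_iff.2 huv
    have hle : Submodule.span L {u, v} ≤ U := by
      rw [Submodule.span_le]
      rintro x hx
      rcases hx with rfl | rfl
      · exact hu
      · exact hv
    refine (Submodule.eq_of_le_of_finrank_le hle ?_).symm
    rw [hU]
    have hrange : Set.range ![u, v] = {u, v} := by
      simp only [Matrix.range_cons, Matrix.range_empty, Set.union_empty,
        Set.union_singleton]
      exact Set.pair_comm v u
    have h6 := finrank_span_eq_card hind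
    rw [hrange, Fintype.card_fin] at h6
    rw [h6]
  -- ## the subspace D of coefficients
  set γ : Fin (r - 2 + 1) → L := Fin.cons (1 : L) ρ with hγ
  set D : Submodule K L := Submodule.span K (Set.range γ) with hD
  have hγsum : ∀ c : Fin (r - 2 + 1) → K,
      (∑ k, c k • γ k) = algebraMap K L (c 0) + ∑ i, algebraMap K L (c i.succ) * ρ i := by
    intro c
    rw [Fin.sum_univ_succ]
    congr 1
    · rw [hγ, Fin.cons_zero, Algebra.smul_def, mul_one]
    · refine Finset.sum_congr rfl fun i _ => ?_
      rw [hγ, Fin.cons_succ, Algebra.smul_def]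
  have hDmem : ∀ α : L, α ∈ D ↔ ∃ (x : K) (y : Fin (r - 2) → K),
      α = algebraMap K L x + ∑ i, algebraMap K L (y i) * ρ i := by
    intro α
    rw [hD, mem_span_range_iff_exists_fun]
    constructor
    · rintro ⟨c, hc⟩
      exact ⟨c 0, fun i => c i.succ, by rw [← hc, hγsum]⟩
    · rintro ⟨x, y, rfl⟩
      refine ⟨Fin.cons x y, ?_⟩
      rw [hγsum]
      simp [Fin.cons_zero, Fin.cons_succ]
  have hmemA : ∀ α : L, Submodule.span L {α • u + v} ∈ A ↔ α ∈ D := by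
    intro α
    rw [hApar]
    constructor
    · rintro ⟨x, y, hQ⟩
      have h1 := hinj α _ hQ
      rw [h1]
      exact (hDmem _).2 ⟨x, y, rfl⟩
    · intro hα
      obtain ⟨x, y, hxy⟩ := (hDmem α).1 hα
      exact ⟨x, y, by rw [hxy]⟩
  -- ## the vector w with T = span {w}, and u = δ • w
  have hTmem : T ∈ {P | P ∈ BSet L (V : Set (Fin r → L)) ∧ P ≤ U} := by
    rw [htangent]; rfl
  obtain ⟨⟨w, hwV, hw0, hTw⟩, hTU⟩ := hTmem
  have hu_mem : u ∈ Submodule.span L {w} := by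
    rw [← hTw, hTu]; exact Submodule.mem_span_singleton_self _
  obtain ⟨δ, hδu⟩ := Submodule.mem_span_singleton.1 hu_mem
  have hδ0 : δ ≠ 0 := by
    rintro rfl
    rw [zero_smul] at hδu
    exact hu0 hδu.symm
  -- ## a K-basis of H
  have hcard : Module.finrank K H = r - 2 + 1 := by rw [hHrank]; omega
  set bH := (Module.finBasis K H).reindex (finCongr hcard) with hbH
  set h : Fin (r - 2 + 1) → (Fin r → L) := fun j => (bH j : Fin r → L) with hh
  have hmemh : ∀ j, h j ∈ H := fun j => (bH j).2
  have hspanh : Submodule.span K (Set.range h) = H := by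
    have h0 : h = H.subtype ∘ bH := rfl
    rw [h0, Set.range_comp, ← Submodule.map_span, Basis.span_eq, Submodule.map_subtype_top]
  have hEh : Submodule.span L (H : Set (Fin r → L)) = Submodule.span L (Set.range h) := by
    have h1 := Submodule.span_span_of_tower (R := K) (S := L)
      (s := Set.range h) (M := Fin r → L)
    rw [hspanh] at h1
    rw [← h1]
  have hvE : v ∈ Submodule.span L (H : Set (Fin r → L)) :=
    hPH (hPv ▸ Submodule.mem_span_singleton_self v)
  obtain ⟨lam, hlam⟩ : ∃ lam : Fin (r - 2 + 1) → L, ∑ j, lam j • h j = v := by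
    rw [hEh] at hvE
    exact (mem_span_range_iff_exists_fun L).1 hvE
  have hwH : w ∉ H := by
    intro hw
    have huE : u ∈ Submodule.span L (H : Set (Fin r → L)) := by
      rw [← hδu]
      exact Submodule.smul_mem _ δ (Submodule.subset_span hw)
    refine hext H hHV hHrank ?_
    rw [hUuv, Submodule.span_le]
    rintro x hx
    rcases hx with rfl | rfl
    · exact huE
    · exact hvE
  -- ## forward: δ * D ⊆ span of lam
  have hfwd : ∀ α ∈ D, δ * α ∈ Submodule.span K (Set.range lam) := by
    intro α hα
    have hQA : Submodule.span L {α • u + v} ∈ A := (hmemA α).2 hα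
    have hQS : Submodule.span L {α • u + v} ∈ Splash K L V U r := by
      rw [hsplash]; exact Set.mem_insert_of_mem _ hQA
    obtain ⟨-, -, H', hH'V, hH'rank, hQle⟩ := hQS
    obtain ⟨G, hGker, hGK⟩ := hyperplane_ext (by omega) hVrank hVspan hH'V hH'rank
    have hz : G (α • u + v) = 0 := by
      have h1 := hQle (Submodule.mem_span_singleton_self _)
      rw [hGker] at h1
      exact h1
    obtain ⟨c, hc⟩ := hGK w hwV
    choose cl hcl using fun j => hGK (h j) (hHV (hmemh j))
    have hGu : G u = δ * algebraMap K L c := by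
      rw [← hδu, map_smul, hc, smul_eq_mul]
    have hGv : G v = ∑ j, lam j * algebraMap K L (cl j) := by
      rw [← hlam, map_sum]
      refine Finset.sum_congr rfl fun j _ => ?_
      rw [map_smul, hcl, smul_eq_mul]
    have hz' : α * (δ * algebraMap K L c) + ∑ j, lam j * algebraMap K L (cl j) = 0 := by
      rw [← hGu, ← hGv, ← hz, map_add, map_smul, smul_eq_mul]
    by_cases hc0 : c = 0
    · exfalso
      rw [hc0, map_zero, mul_zero, mul_zero, zero_add] at hz'
      refine hext H' hH'V hH'rank ?_
      have hUker : U ≤ LinearMap.ker G := by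
        rw [hUuv, Submodule.span_le]
        rintro x hx
        rcases hx with rfl | rfl
        · rw [SetLike.mem_coe, LinearMap.mem_ker, hGu, hc0, map_zero, mul_zero]
        · rw [SetLike.mem_coe, LinearMap.mem_ker, hGv, hz']
      rw [hGker]
      exact hUker
    · have hAc : algebraMap K L c ≠ 0 := fun hx =>
        hc0 ((algebraMap K L).injective (by rw [hx, map_zero]))
      have key : δ * α = ∑ j, (-(cl j * c⁻¹)) • lam j := by
        apply mul_right_cancel₀ hAc
        rw [Finset.sum_mul]
        have h7 : ∀ j ∈ Finset.univ, ((-(cl j * c⁻¹)) • lam j) * algebraMap K L c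
            = -(lam j * algebraMap K L (cl j)) := by
          intro j _
          rw [Algebra.smul_def, map_neg, map_mul, map_inv₀, neg_mul, neg_mul, neg_inj,
            mul_comm (lam j), mul_right_comm, mul_assoc _ (algebraMap K L c)⁻¹,
            inv_mul_cancel₀ hAc, mul_one]
        rw [Finset.sum_congr rfl h7, Finset.sum_neg_distrib]
        linear_combination hz'
      rw [key]
      exact (mem_span_range_iff_exists_fun K).2 ⟨fun j => -(cl j * c⁻¹), rfl⟩
  -- ## reverse: lam j / δ ∈ D
  have hhind : LinearIndependent K h := by
    have := bH.linearIndependent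
    exact this.map' H.subtype (Submodule.ker_subtype H)
  have hrev : ∀ j, δ⁻¹ * lam j ∈ D := by
    intro j
    set q : Fin (r - 2 + 1) → (Fin r → L) := fun k => if k = j then h j - w else h k with hq
    have hsumq : ∀ g : Fin (r - 2 + 1) → L, ∑ k, g k • q k = (∑ k, g k • h k) - g j • w := by
      intro g
      have h1 : ∀ k, g k • q k = g k • h k - (if k = j then g k • w else 0) := by
        intro k
        rw [hq]
        by_cases hk : k = j
        · subst hk; simp [smul_sub]
        · simp [hk]
      rw [Finset.sum_congr rfl fun k _ => h1 k, Finset.sum_sub_distrib,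
        Finset.sum_ite_eq' Finset.univ j (fun k => g k • w)]
      simp
    have hsumqK : ∀ g : Fin (r - 2 + 1) → K, ∑ k, g k • q k = (∑ k, g k • h k) - g j • w := by
      intro g
      have h1 : ∀ k, g k • q k = g k • h k - (if k = j then g k • w else 0) := by
        intro k
        rw [hq]
        by_cases hk : k = j
        · subst hk; simp [smul_sub]
        · simp [hk]
      rw [Finset.sum_congr rfl fun k _ => h1 k, Finset.sum_sub_distrib,
        Finset.sum_ite_eq' Finset.univ j (fun k => g k • w)]
      simp
    have hqV : ∀ k, q k ∈ V := by
      intro k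
      rw [hq]
      by_cases hk : k = j
      · subst hk; simp only [if_pos rfl]; exact Submodule.sub_mem V (hHV (hmemh k)) hwV
      · simp only [if_neg hk]; exact hHV (hmemh k)
    have hqind : LinearIndependent K q := by
      rw [Fintype.linearIndependent_iff]
      intro g hg
      rw [hsumqK] at hg
      have hgj : g j = 0 := by
        by_contra hgj
        have hwH' : w = (g j)⁻¹ • ∑ k, g k • h k := by
          have h2 : (∑ k, g k • h k) = g j • w := by
            have := sub_eq_zero.1 hg
            exact this
          rw [h2, smul_smul, inv_mul_cancel₀ hgj, one_smul]
        exact hwH (hwH' ▸ Submodule.smul_mem H _ (Submodule.sum_mem H fun k _ =>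
          Submodule.smul_mem H _ (hmemh k)))
      rw [hgj, zero_smul, sub_zero] at hg
      exact Fintype.linearIndependent_iff.1 hhind g hg
    have hQrank : Module.finrank K (Submodule.span K (Set.range q)) = r - 1 := by
      rw [finrank_span_eq_card hqind, Fintype.card_fin]
      omega
    have hQV : Submodule.span K (Set.range q) ≤ V := by
      rw [Submodule.span_le]
      rintro x ⟨k, rfl⟩
      exact hqV k
    set α : L := -(δ⁻¹ * lam j) with hα
    have hzq : α • u + v = ∑ k, lam k • q k := by
      rw [hsumq lam, hlam]
      have h3 : α • u = -(lam j • w) := by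
        rw [← hδu, smul_smul]
        have h8 : α * δ = -(lam j) := by
          rw [hα]
          field_simp
        rw [h8, neg_smul]
      rw [h3]
      abel
    have hQS : Submodule.span L {α • u + v} ∈ Splash K L V U r := by
      refine ⟨finrank_span_singleton (hne0 α), ?_, Submodule.span K (Set.range q), hQV, hQrank, ?_⟩
      · rw [Submodule.span_singleton_le_iff_mem]
        exact U.add_mem (U.smul_mem α hu) hv
      · rw [Submodule.span_singleton_le_iff_mem]
        have h4 := Submodule.span_span_of_tower (R := K) (S := L)
          (s := Set.range q) (M := Fin r → L)
        rw [h4]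
        exact (mem_span_range_iff_exists_fun L).2 ⟨lam, hzq.symm⟩
    have hQiA : Submodule.span L {α • u + v} ∈ insert T A := by rw [← hsplash]; exact hQS
    rcases Set.mem_insert_iff.1 hQiA with h5 | h5
    · exact absurd h5 (hQneT α)
    · have h6 : α ∈ D := (hmemA α).1 h5
      have h7 : δ⁻¹ * lam j = -α := by rw [hα, neg_neg]
      rw [h7]
      exact D.neg_mem h6
  -- ## the family d = lam/δ is a basis of D
  set d : Fin (r - 2 + 1) → L := fun j => δ⁻¹ * lam j with hd
  have hdD : ∀ j, d j ∈ D := hrev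
  have hlamd : ∀ j, lam j = δ * d j := by
    intro j
    rw [hd]
    field_simp
  have hspand : Submodule.span K (Set.range d) = D := by
    refine le_antisymm (Submodule.span_le.2 ?_) ?_
    · rintro x ⟨j, rfl⟩
      exact hdD j
    · intro x hx
      have h8 := hfwd x hx
      obtain ⟨c, hc⟩ := (mem_span_range_iff_exists_fun K).1 h8
      refine (mem_span_range_iff_exists_fun K).2 ⟨c, ?_⟩
      have h9 : ∑ j, c j • d j = δ⁻¹ * (δ * x) := by
        rw [← hc, Finset.mul_sum]
        refine Finset.sum_congr rfl fun j _ => ?_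
        rw [hd, mul_smul_comm]
      rw [h9, ← mul_assoc, inv_mul_cancel₀ hδ0, one_mul]
  have hDrank : Module.finrank K D = Fintype.card (Fin (r - 2 + 1)) := by
    rw [hD, finrank_span_eq_card hρ]
  have hdind : LinearIndependent K d := by
    rw [linearIndependent_iff_card_eq_finrank_span, Set.finrank, hspand]
    exact hDrank.symm
  have hγD : ∀ k, γ k ∈ D := fun k => Submodule.subset_span (Set.mem_range_self k)
  set dD : Fin (r - 2 + 1) → D := fun j => ⟨d j, hdD j⟩ with hdD'
  set γD : Fin (r - 2 + 1) → D := fun k => ⟨γ k, hγD k⟩ with hγD'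
  have hind_dD : LinearIndependent K dD := by
    apply LinearIndependent.of_comp D.subtype
    exact hdind
  have hind_γD : LinearIndependent K γD := by
    apply LinearIndependent.of_comp D.subtype
    exact hρ
  have hspan_dD : ⊤ ≤ Submodule.span K (Set.range dD) := by
    have hmap : Submodule.map D.subtype (Submodule.span K (Set.range dD))
        = Submodule.map D.subtype ⊤ := by
      rw [Submodule.map_span, ← Set.range_comp, Submodule.map_subtype_top]
      exact hspand
    exact ge_of_eq (Submodule.map_injective_of_injective D.injective_subtype hmap)
  have hspan_γD : ⊤ ≤ Submodule.span K (Set.range γD) := by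
    have hmap : Submodule.map D.subtype (Submodule.span K (Set.range γD))
        = Submodule.map D.subtype ⊤ := by
      rw [Submodule.map_span, ← Set.range_comp, Submodule.map_subtype_top]
      exact hD.symm
    exact ge_of_eq (Submodule.map_injective_of_injective D.injective_subtype hmap)
  set Bd : Basis (Fin (r - 2 + 1)) K D := Basis.mk hind_dD hspan_dD with hBd
  set Bγ : Basis (Fin (r - 2 + 1)) K D := Basis.mk hind_γD hspan_γD with hBγ
  -- ## construction of s
  set nM : Fin (r - 2 + 1) → Fin (r - 2 + 1) → K := fun j k => Bγ.repr (dD j) k with hnM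
  set t : Fin (r - 2 + 1) → (Fin r → L) := fun k => ∑ j, nM j k • h j with ht
  set s : Fin (r - 2 + 1) → (Fin r → L) := fun k => δ • t k with hs
  have hsum_d : ∀ j, ∑ k, nM j k • γ k = d j := by
    intro j
    have h9 := congrArg D.subtype (Bγ.sum_repr (dD j))
    rw [map_sum] at h9
    simpa [hBγ, Basis.mk_apply, hnM] using h9
  have hv2 : v = ∑ k, γ k • s k := by
    have c1 : ∑ k, γ k • s k = δ • ∑ k, γ k • t k := by
      rw [Finset.smul_sum]
      refine Finset.sum_congr rfl fun k _ => ?_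
      rw [hs, smul_comm]
    have c2 : ∑ k, γ k • t k = ∑ j, d j • h j := by
      have e1 : ∀ k, γ k • t k = ∑ j, nM j k • (γ k • h j) := by
        intro k
        rw [ht, Finset.smul_sum]
        refine Finset.sum_congr rfl fun j _ => ?_
        rw [smul_comm]
      rw [Finset.sum_congr rfl fun k _ => e1 k, Finset.sum_comm]
      refine Finset.sum_congr rfl fun j _ => ?_
      rw [← hsum_d j, Finset.sum_smul]
      refine Finset.sum_congr rfl fun k _ => ?_
      rw [smul_assoc]
    rw [c1, c2, ← hlam, Finset.smul_sum]
    refine Finset.sum_congr rfl fun j _ => ?_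
    rw [hlamd j, mul_smul]
  have goal2 : v = s 0 + ∑ i, ρ i • s i.succ := by
    have e0 : γ 0 = 1 := by rw [hγ]; exact Fin.cons_zero _ _
    have es : ∀ i : Fin (r - 2), γ i.succ = ρ i := fun i => by
      rw [hγ]; exact Fin.cons_succ _ _ _
    rw [hv2, Fin.sum_univ_succ, e0, one_smul]
    simp only [es]
  set mulδ : (Fin r → L) →ₗ[K] (Fin r → L) :=
    (LinearMap.lsmul L (Fin r → L) δ).restrictScalars K with hmulδ
  have hspant : Submodule.span K (Set.range t) = H := by
    refine le_antisymm (Submodule.span_le.2 ?_) ?_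
    · rintro x ⟨k, rfl⟩
      rw [ht]
      exact Submodule.sum_mem H fun j _ => Submodule.smul_mem H _ (hmemh j)
    · rw [← hspanh]
      refine Submodule.span_le.2 ?_
      rintro x ⟨i, rfl⟩
      set mM : Fin (r - 2 + 1) → Fin (r - 2 + 1) → K := fun k i => Bd.repr (γD k) i with hmM
      have hmat : Bd.toMatrix ⇑Bγ * Bγ.toMatrix ⇑Bd = 1 := Basis.toMatrix_mul_toMatrix_flip Bd Bγ
      have hentry : ∀ j i, ∑ k, mM k i * nM j k = if i = j then (1:K) else 0 := by
        intro j i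
        have h9 := congrFun (congrFun hmat i) j
        simpa [Matrix.mul_apply, Basis.toMatrix_apply, Basis.mk_apply, Matrix.one_apply,
          hmM, hnM, hBd, hBγ] using h9
      refine (mem_span_range_iff_exists_fun K).2 ⟨fun k => mM k i, ?_⟩
      have e2 : ∀ k, mM k i • t k = ∑ j, (mM k i * nM j k) • h j := by
        intro k
        rw [ht, Finset.smul_sum]
        refine Finset.sum_congr rfl fun j _ => ?_
        rw [smul_smul]
      rw [Finset.sum_congr rfl fun k _ => e2 k, Finset.sum_comm]
      have e3 : ∀ j, ∑ k, (mM k i * nM j k) • h j = (if i = j then (1:K) else 0) • h j := by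
        intro j
        rw [← Finset.sum_smul, hentry j i]
      rw [Finset.sum_congr rfl fun j _ => e3 j]
      simp
  have hranges : Set.range s = mulδ '' Set.range t := by
    rw [← Set.range_comp]
    rfl
  have hspans : Submodule.span K (Set.range s) = Submodule.map mulδ H := by
    rw [hranges, ← Submodule.map_span, hspant]
  have hsupw : Submodule.span K {w} ⊔ H = V := by
    have hinf : Submodule.span K {w} ⊓ H = ⊥ := by
      rw [eq_bot_iff]
      rintro x hx
      rw [Submodule.mem_inf] at hx
      obtain ⟨hx2, hx1⟩ := hx
      rw [Submodule.mem_span_singleton] at hx2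
      obtain ⟨k, rfl⟩ := hx2
      rcases eq_or_ne k 0 with rfl | hk
      · simp
      · exact absurd (by simpa [smul_smul, hk] using Submodule.smul_mem H k⁻¹ hx1) hwH
    refine Submodule.eq_of_le_of_finrank_le
      (sup_le (by rwa [Submodule.span_singleton_le_iff_mem]) hHV) ?_
    have h2 := Submodule.finrank_sup_add_finrank_inf_eq (Submodule.span K {w}) H
    rw [hinf, hHrank, finrank_span_singleton hw0, finrank_bot] at h2
    rw [hVrank]
    omega
  have hspanins : Submodule.span K (insert u (Set.range s)) = Submodule.map mulδ V := by
    rw [Submodule.span_insert, hspans]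
    have h1 : Submodule.span K {u} = Submodule.map mulδ (Submodule.span K {w}) := by
      rw [Submodule.map_span, Set.image_singleton]
      rw [show mulδ w = u from hδu]
    rw [h1, ← Submodule.map_sup, hsupw]
  refine ⟨s, ?_, goal2, ?_⟩
  · have hset : ((Submodule.map mulδ H : Submodule K (Fin r → L)) : Set (Fin r → L))
        = (δ • ·) '' (H : Set (Fin r → L)) := by
      rw [Submodule.map_coe]
      rfl
    rw [hspans, hset, BSet_smul_image hδ0]
  · have hset : ((Submodule.map mulδ V : Submodule K (Fin r → L)) : Set (Fin r → L))
        = (δ • ·) '' (V : Set (Fin r → L)) := by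
      rw [Submodule.map_coe]
      rfl
    rw [hspanins, hset, BSet_smul_image hδ0]
end
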